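/- arXiv:2104.09374 — 4 statements merged into one kernel-verified Lean document; each statement's English description precedes it below -/
import Mathlib

section
/- Let D be the unique ℚ-linear derivation on the polynomial ring ℚ[e,x,y] determined by D(e) = e(x+y), D(x) = x²+y², D(y) = x²+y². Then for every n ≥ 0, the n-th iterate satisfies Dⁿ(e) = e · Σ_{k=0}^{n} B̂(n,k) x^k y^{n−k}, where B̂(n,k) are the type B alternating Eulerian numbers. -/
open Finset

/-- Signed permutations of order `n` (the hyperoctahedral group), modeled as a
permutation of `Fin n` together with a sign for each position. -/
abbrev BSigned (n : ℕ) := Equiv.Perm (Fin n) × (Fin n → Bool)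

/-- The word of a signed permutation: `bword σ j = σ(j)` for `1 ≤ j ≤ n`,
with the convention `σ(0) = 0`. -/
def bword {n : ℕ} (σ : BSigned n) (j : ℕ) : ℤ :=
  if h : 1 ≤ j ∧ j ≤ n then
    (if σ.2 ⟨j - 1, by omega⟩ then -1 else 1) * ((σ.1 ⟨j - 1, by omega⟩ : ℕ) + 1)
  else 0

/-- The number of alternating descents of a signed permutation: the number of
`0 ≤ j ≤ n-1` such that `j` is even and `σ(j) < σ(j+1)`, or `j` is odd and `σ(j) > σ(j+1)`. -/
def altdesB {n : ℕ} (σ : BSigned n) : ℕ :=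
  ((Finset.range n).filter (fun j => (Even j ∧ bword σ j < bword σ (j + 1)) ∨
      (Odd j ∧ bword σ (j + 1) < bword σ j))).card

/-- The type B alternating Eulerian number `B̂(n,k)`. -/
def Bhat (n k : ℕ) : ℕ :=
  (Finset.univ.filter (fun σ : BSigned n => altdesB σ = k)).card

/-- The type B alternating Eulerian polynomial `B̂_n(x)` as a real function. -/
noncomputable def Bpoly (n : ℕ) (x : ℝ) : ℝ :=
  ∑ σ : BSigned n, x ^ altdesB σ

/-- The word of a permutation of `{1,…,n}`: `aword π j = π(j)` for `1 ≤ j ≤ n`,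
with the convention `π(0) = 0`. -/
def aword {n : ℕ} (π : Equiv.Perm (Fin n)) (j : ℕ) : ℕ :=
  if h : 1 ≤ j ∧ j ≤ n then (π ⟨j - 1, by omega⟩ : ℕ) + 1 else 0

/-- The number of alternating descents of a permutation: the number of
`1 ≤ j ≤ n-1` such that `j` is odd and `π(j) > π(j+1)`, or `j` is even and `π(j) < π(j+1)`. -/
def altdesA {n : ℕ} (π : Equiv.Perm (Fin n)) : ℕ :=
  ((Finset.Icc 1 (n - 1)).filter (fun j => (Odd j ∧ aword π (j + 1) < aword π j) ∨
      (Even j ∧ aword π j < aword π (j + 1)))).card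

/-- The type A alternating Eulerian number `Â(n,k)`. -/
def Ahat (n k : ℕ) : ℕ :=
  (Finset.univ.filter (fun π : Equiv.Perm (Fin n) => altdesA π = k)).card

/-- The type A alternating Eulerian polynomial `Â_n(x)` as a real function. -/
noncomputable def Apoly (n : ℕ) (x : ℝ) : ℝ :=
  ∑ π : Equiv.Perm (Fin n), x ^ altdesA π

/-- The number of left peaks of a permutation: indices `1 ≤ i ≤ n-1` with
`π(i-1) < π(i) > π(i+1)`, where `π(0) = 0`. -/
def lpk {n : ℕ} (π : Equiv.Perm (Fin n)) : ℕ :=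
  ((Finset.Icc 1 (n - 1)).filter (fun i =>
      aword π (i - 1) < aword π i ∧ aword π (i + 1) < aword π i)).card

/-- `M n k` is the number of permutations of `{1,…,n}` with exactly `k` left peaks. -/
def M (n k : ℕ) : ℕ :=
  (Finset.univ.filter (fun π : Equiv.Perm (Fin n) => lpk π = k)).card

/-- The derivative polynomials for secant: `Q 0 = 1`,
`Q (n+1) = x Q n + (1+x²) (Q n)'`. -/
noncomputable def Q : ℕ → Polynomial ℝ
  | 0 => 1
  | n + 1 => Polynomial.X * Q n + (1 + Polynomial.X ^ 2) * Polynomial.derivative (Q n)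

/-- The coefficients `ξ_{n,i}` (terms with negative index vanish). -/
def xi : ℕ → ℤ → ℤ
  | 0, i => if i = 0 then 1 else 0
  | n + 1, i => (1 + 2 * (n : ℤ) - 6 * i) * xi n i + ((n : ℤ) - 2 * i + 2) * xi n (i - 1)
      - 4 * (i + 1) * xi n (i + 1)

/-- The polynomial `ξ_n(x) = Σ_{i=0}^{⌊n/2⌋} ξ_{n,i} x^i` as a real function. -/
noncomputable def xiPoly (n : ℕ) (x : ℝ) : ℝ :=
  ∑ i ∈ Finset.range (n / 2 + 1), (xi n i : ℝ) * x ^ i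

/-- A snake: a signed permutation with `σ(0) < σ(1) > σ(2) < σ(3) > ⋯`. -/
def IsSnake {n : ℕ} (σ : BSigned n) : Prop :=
  ∀ i : ℕ, (2 * i + 1 ≤ n → bword σ (2 * i) < bword σ (2 * i + 1)) ∧
    (2 * i + 2 ≤ n → bword σ (2 * i + 2) < bword σ (2 * i + 1))

/-- The Springer number `s_n`: the number of snakes of order `n`. -/
noncomputable def springer (n : ℕ) : ℕ := Nat.card {σ : BSigned n // IsSnake σ}

/-- An alternating (down-up) permutation: `π(1) > π(2) < π(3) > ⋯`. -/
def IsAlternating {m : ℕ} (π : Equiv.Perm (Fin m)) : Prop :=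
  ∀ j : ℕ, 1 ≤ j → j + 1 ≤ m →
    (Odd j → aword π (j + 1) < aword π j) ∧ (Even j → aword π j < aword π (j + 1))

/-- The secant number `E_{2n}`: the number of alternating permutations of `{1,…,2n}`. -/
noncomputable def secantNumber (n : ℕ) : ℕ :=
  Nat.card {π : Equiv.Perm (Fin (2 * n)) // IsAlternating π}

/-! ### Auxiliary development for `stmt1`.

We prove the grammatical interpretation by induction.  The key combinatorial
ingredient is a "twisted insertion" bijection
`BSigned n × Fin (n+1) × Bool ≃ BSigned (n+1)`: insert the letter `±(n+1)` in a
gap `p` and negate all letters after it.  This bijection changes the number of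
alternating descents in a completely controlled way, which yields the
recurrence encoded by the derivation `D`. -/

namespace Stmt1Aux

open MvPolynomial

variable {n : ℕ}

/-- The alternating-descent condition at index `j`. -/
def condB {n : ℕ} (σ : BSigned n) (j : ℕ) : Prop :=
  (Even j ∧ bword σ j < bword σ (j + 1)) ∨ (Odd j ∧ bword σ (j + 1) < bword σ j)

instance (σ : BSigned n) : DecidablePred (condB σ) := fun _ => by unfold condB; infer_instance

lemma altdes_eq (σ : BSigned n) : altdesB σ = ((range n).filter (condB σ)).card := by
  unfold altdesB condB; congr 1

lemma altdes_le (σ : BSigned n) : altdesB σ ≤ n := by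
  rw [altdes_eq]
  exact (Finset.card_filter_le _ _).trans (le_of_eq (card_range n))

/-- Permutation part of the insertion: value `n` (i.e. letter `n+1`) goes to
position `p`, all other values are shifted. -/
def insP (π : Equiv.Perm (Fin n)) (p : Fin (n+1)) : Equiv.Perm (Fin (n+1)) :=
  (finSuccEquiv' p).trans ((Equiv.optionCongr π).trans (finSuccEquiv' (Fin.last n)).symm)

/-- Twisted insertion of the letter `±(n+1)` at gap `p`: all letters after the
new one get their signs flipped. -/
def ins (σ : BSigned n) (p : Fin (n+1)) (s : Bool) : BSigned (n+1) :=
  (insP σ.1 p, fun j => (finSuccEquiv' p j).elim s (fun i => xor (σ.2 i) (p < j)))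

lemma insP_self (π : Equiv.Perm (Fin n)) (p : Fin (n+1)) : insP π p p = Fin.last n := by
  simp [insP, finSuccEquiv'_at, finSuccEquiv'_symm_none]

lemma insP_succAbove (π : Equiv.Perm (Fin n)) (p : Fin (n+1)) (i : Fin n) :
    insP π p (p.succAbove i) = (π i).castSucc := by
  simp [insP, finSuccEquiv'_succAbove, finSuccEquiv'_symm_some, Fin.succAbove_last]

lemma ins_sign_self (σ : BSigned n) (p : Fin (n+1)) (s : Bool) : (ins σ p s).2 p = s := by
  simp [ins, finSuccEquiv'_at]

lemma ins_sign_succAbove (σ : BSigned n) (p : Fin (n+1)) (s : Bool) (i : Fin n) :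
    (ins σ p s).2 (p.succAbove i) = xor (σ.2 i) (p < p.succAbove i) := by
  simp [ins, finSuccEquiv'_succAbove]

lemma bword_bound (σ : BSigned n) (j : ℕ) : -(n : ℤ) ≤ bword σ j ∧ bword σ j ≤ n := by
  unfold bword
  split
  · next h =>
    have hv : ((σ.1 ⟨j - 1, by omega⟩ : Fin n) : ℕ) < n := Fin.is_lt _
    split <;> push_cast <;> omega
  · simp [Int.natCast_nonneg]

lemma bword_ins_low (σ : BSigned n) (p : Fin (n+1)) (s : Bool) {j : ℕ} (h2 : j ≤ p) :
    bword (ins σ p s) j = bword σ j := by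
  rcases Nat.eq_zero_or_pos j with rfl | h1
  · simp [bword]
  have hpn : (p : ℕ) ≤ n := Fin.is_le p
  have hj : j - 1 < n := by omega
  rw [bword, bword, dif_pos ⟨h1, by omega⟩, dif_pos ⟨h1, by omega⟩]
  have key : (⟨j - 1, by omega⟩ : Fin (n+1)) = p.succAbove ⟨j - 1, hj⟩ := by
    rw [Fin.succAbove_of_castSucc_lt]
    · rfl
    · rw [Fin.lt_def]; simpa using by omega
  rw [key]
  have h3 : ¬ (p < p.succAbove ⟨j - 1, hj⟩) := by
    rw [← key, Fin.lt_def]; simp; omega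
  show _ * _ = _
  rw [show (ins σ p s).1 (p.succAbove ⟨j-1,hj⟩) = (σ.1 ⟨j-1,hj⟩).castSucc from insP_succAbove ..,
    ins_sign_succAbove]
  simp [h3]

lemma bword_ins_mid (σ : BSigned n) (p : Fin (n+1)) (s : Bool) :
    bword (ins σ p s) ((p : ℕ) + 1) = (if s then -1 else 1) * ((n : ℤ) + 1) := by
  have hpn : (p : ℕ) ≤ n := Fin.is_le p
  rw [bword, dif_pos ⟨by omega, by omega⟩]
  have key : (⟨(p : ℕ) + 1 - 1, by omega⟩ : Fin (n+1)) = p := by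
    ext; simp
  rw [key]
  show _ * _ = _
  rw [show (ins σ p s).1 p = Fin.last n from insP_self .., ins_sign_self]
  simp

lemma bword_ins_high (σ : BSigned n) (p : Fin (n+1)) (s : Bool) {j : ℕ}
    (h1 : (p : ℕ) + 2 ≤ j) (h2 : j ≤ n + 1) :
    bword (ins σ p s) j = - bword σ (j - 1) := by
  have hj : j - 2 < n := by omega
  rw [bword, bword, dif_pos ⟨by omega, h2⟩, dif_pos ⟨by omega, by omega⟩]
  have key : (⟨j - 1, by omega⟩ : Fin (n+1)) = p.succAbove ⟨j - 2, hj⟩ := by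
    rw [Fin.succAbove_of_le_castSucc]
    · ext; simp; omega
    · rw [Fin.le_def]; simpa using by omega
  have h3 : p < p.succAbove ⟨j - 2, hj⟩ := by
    rw [← key, Fin.lt_def]; simp; omega
  rw [key]
  show _ * _ = _
  rw [show (ins σ p s).1 (p.succAbove ⟨j-2,hj⟩) = (σ.1 ⟨j-2,hj⟩).castSucc from insP_succAbove ..,
    ins_sign_succAbove]
  have : (⟨j - 1 - 1, by omega⟩ : Fin n) = ⟨j - 2, hj⟩ := by ext; simp; omega
  rw [this]
  simp only [h3, decide_true]
  cases σ.2 ⟨j - 2, hj⟩ <;> simp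

/-- The inserted letter contributes alternating descents exactly when the
parity of the gap matches the sign. -/
def good (p : ℕ) (s : Bool) : Prop := Even p ↔ s = false

instance : ∀ p s, Decidable (good p s) := fun _ _ => by unfold good; infer_instance

lemma cond_ins_self (σ : BSigned n) (p : Fin (n+1)) (s : Bool) :
    condB (ins σ p s) p ↔ good p s := by
  obtain ⟨hb1, hb2⟩ := bword_bound σ p
  unfold condB good
  rw [bword_ins_mid, bword_ins_low σ p s (le_refl _)]
  cases s <;>
    simp only [if_true, if_false, Bool.false_eq_true, iff_false, iff_true,
      Nat.even_iff, Nat.odd_iff, Bool.true_eq_false] <;> omega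

lemma cond_ins_succ (σ : BSigned n) (p : Fin (n+1)) (s : Bool) (hp : (p : ℕ) < n) :
    condB (ins σ p s) ((p : ℕ) + 1) ↔ good p s := by
  obtain ⟨hb1, hb2⟩ := bword_bound σ ((p : ℕ) + 1)
  unfold condB good
  rw [bword_ins_mid, show (p:ℕ)+1+1 = (p:ℕ)+2 from rfl,
    bword_ins_high σ p s (le_refl _) (by omega)]
  simp only [show (p:ℕ)+2-1 = (p:ℕ)+1 from rfl]
  cases s <;>
    simp only [if_true, if_false, Bool.false_eq_true, iff_false, iff_true,
      Nat.even_iff, Nat.odd_iff, Bool.true_eq_false] <;> omega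

lemma cond_ins_high (σ : BSigned n) (p : Fin (n+1)) (s : Bool) {j : ℕ}
    (h1 : (p : ℕ) + 2 ≤ j) (h2 : j ≤ n) :
    condB (ins σ p s) j ↔ condB σ (j - 1) := by
  unfold condB
  rw [bword_ins_high σ p s h1 (by omega), bword_ins_high σ p s (by omega) (by omega),
    show j + 1 - 1 = j - 1 + 1 from by omega]
  simp only [Nat.even_iff, Nat.odd_iff]
  omega

lemma cond_ins_low (σ : BSigned n) (p : Fin (n+1)) (s : Bool) {j : ℕ} (h : j + 1 ≤ p) :
    condB (ins σ p s) j ↔ condB σ j := by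
  unfold condB
  rw [bword_ins_low σ p s (by omega), bword_ins_low σ p s (by omega)]

lemma card_filter_Ico (σ : BSigned n) (a b : ℕ) :
    (((Ico a b)).filter (condB σ)).card = ∑ j ∈ Ico a b, if condB σ j then 1 else 0 :=
  Finset.card_filter _ _

lemma altdes_split (σ : BSigned n) (p : ℕ) (hp : p < n) :
    altdesB σ = ((range p).filter (condB σ)).card + (if condB σ p then 1 else 0)
      + ((Ico (p+1) n).filter (condB σ)).card := by
  rw [altdes_eq, range_eq_Ico, Finset.card_filter,
    ← Finset.sum_Ico_consecutive _ (Nat.zero_le p) (le_of_lt hp),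
    Finset.sum_eq_sum_Ico_succ_bot hp, ← range_eq_Ico, ← Finset.card_filter, ← Finset.card_filter]
  ring

lemma altdes_ins (σ : BSigned n) (p : Fin (n+1)) (s : Bool) (hp : (p : ℕ) < n) :
    altdesB (ins σ p s) = ((range (p : ℕ)).filter (condB σ)).card
      + ((Ico ((p : ℕ)+1) n).filter (condB σ)).card + (if good (p : ℕ) s then 2 else 0) := by
  rw [altdes_eq, range_eq_Ico, Finset.card_filter,
    ← Finset.sum_Ico_consecutive (fun j => if condB (ins σ p s) j then 1 else 0)
      (Nat.zero_le (p : ℕ)) (by omega : (p : ℕ) ≤ n + 1),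
    Finset.sum_eq_sum_Ico_succ_bot (by omega : (p : ℕ) < n + 1),
    Finset.sum_eq_sum_Ico_succ_bot (by omega : (p : ℕ) + 1 < n + 1)]
  have e1 : ∑ j ∈ Ico 0 (p : ℕ), (if condB (ins σ p s) j then 1 else 0)
      = ((range (p : ℕ)).filter (condB σ)).card := by
    rw [range_eq_Ico, card_filter_Ico]
    exact Finset.sum_congr rfl fun j hj => by
      rw [if_congr (cond_ins_low σ p s (by simp at hj; omega)) rfl rfl]
  have e2 : ∑ j ∈ Ico ((p : ℕ)+1+1) (n+1), (if condB (ins σ p s) j then 1 else 0)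
      = ((Ico ((p : ℕ)+1) n).filter (condB σ)).card := by
    rw [card_filter_Ico, Finset.sum_Ico_eq_sum_range, Finset.sum_Ico_eq_sum_range]
    have hlen : n + 1 - ((p : ℕ) + 1 + 1) = n - ((p : ℕ) + 1) := by omega
    rw [hlen]
    refine Finset.sum_congr rfl fun i hi => ?_
    simp only [mem_range] at hi
    rw [if_congr (cond_ins_high σ p s (by omega) (by omega)) rfl rfl,
      show (p : ℕ) + 1 + 1 + i - 1 = (p : ℕ) + 1 + i from by omega]
  rw [e1, e2, if_congr (cond_ins_self σ p s) rfl rfl,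
    if_congr (cond_ins_succ σ p s hp) rfl rfl]
  by_cases h : good (p : ℕ) s <;> simp [h] <;> ring

lemma altdes_ins_last (σ : BSigned n) (s : Bool) :
    altdesB (ins σ (Fin.last n) s) = altdesB σ + (if good n s then 1 else 0) := by
  rw [altdes_eq, altdes_eq, Finset.card_filter, Finset.card_filter, Finset.sum_range_succ]
  have e1 : ∀ j ∈ range n, (if condB (ins σ (Fin.last n) s) j then (1:ℕ) else 0)
      = if condB σ j then 1 else 0 := fun j hj => by
    rw [if_congr (cond_ins_low σ (Fin.last n) s (by simp at hj; simp [Fin.last]; omega)) rfl rfl]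
  rw [Finset.sum_congr rfl e1]
  congr 1
  have := cond_ins_self σ (Fin.last n) s
  simp only [Fin.val_last] at this
  rw [if_congr this rfl rfl]

/-- The insertion map, packaged on the product type. -/
def insFun {n : ℕ} : BSigned n × Fin (n+1) × Bool → BSigned (n+1) := fun x => ins x.1 x.2.1 x.2.2

lemma insFun_bijective : Function.Bijective (insFun (n := n)) := by
  rw [Fintype.bijective_iff_injective_and_card]
  constructor
  · rintro ⟨σ, p, s⟩ ⟨τ, q, t⟩ h
    have h1 : insP σ.1 p = insP τ.1 q := congrArg Prod.fst h
    have h2 : (ins σ p s).2 = (ins τ q t).2 := congrArg Prod.snd h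
    have hp : p = q := by
      apply (insP τ.1 q).injective
      rw [insP_self, ← h1, insP_self]
    subst hp
    have hperm : σ.1 = τ.1 := by
      apply Equiv.ext; intro i
      have : insP σ.1 p (p.succAbove i) = insP τ.1 p (p.succAbove i) := by rw [h1]
      rw [insP_succAbove, insP_succAbove] at this
      exact Fin.castSucc_injective n this
    have hsign : σ.2 = τ.2 := by
      funext i
      have := congrFun h2 (p.succAbove i)
      rw [ins_sign_succAbove, ins_sign_succAbove] at this
      cases hc : decide (p < p.succAbove i) <;> rw [hc] at this <;> simpa using this
    have hst : s = t := by
      have := congrFun h2 p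
      rwa [ins_sign_self, ins_sign_self] at this
    have : σ = τ := Prod.ext hperm hsign
    rw [this, hst]
  · simp [Fintype.card_perm, Nat.factorial_succ]
    ring

/-- The basic monomial `x^e y^(N-e)`. -/
noncomputable def mono (N e : ℕ) : MvPolynomial (Fin 3) ℚ := X 1 ^ e * X 2 ^ (N - e)

lemma mono_eq {N E F : ℕ} (h : N = E + F) : mono N E = X 1 ^ E * X 2 ^ F := by
  rw [mono, show N - E = F by omega]

lemma Dmono (D : Derivation ℚ (MvPolynomial (Fin 3) ℚ) (MvPolynomial (Fin 3) ℚ))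
    (hx : D (X 1) = X 1 ^ 2 + X 2 ^ 2) (hy : D (X 2) = X 1 ^ 2 + X 2 ^ 2)
    {N d : ℕ} (hd : d ≤ N) :
    D (mono N d) + (X 1 + X 2) * mono N d
      = d • mono (N+1) (d-1) + (N+1-d) • mono (N+1) d
        + (d+1) • mono (N+1) (d+1) + (N-d) • mono (N+1) (d+2) := by
  obtain ⟨c, rfl⟩ := Nat.exists_eq_add_of_le hd
  rw [mono_eq rfl, Derivation.leibniz, Derivation.leibniz_pow, Derivation.leibniz_pow, hx, hy]
  rcases d with _ | e <;> rcases c with _ | f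
  · rw [mono_eq (show 0+0+1 = 0 + 1 by omega), mono_eq (show 0+0+1 = 1 + 0 by omega)]
    simp only [show (0:ℕ)+0+1-0 = 1 by omega, show (0:ℕ)+0-0 = 0 by omega,
      show (0:ℕ)-1 = 0 by omega, smul_eq_mul, nsmul_eq_mul]
    push_cast
    ring
  · rw [mono_eq (show 0+(f+1)+1 = 0 + (f+2) by omega),
      mono_eq (show 0+(f+1)+1 = 1 + (f+1) by omega),
      mono_eq (show 0+(f+1)+1 = 2 + f by omega)]
    simp only [show (0:ℕ)+(f+1)+1-0 = f+2 by omega, show (0:ℕ)+(f+1)-0 = f+1 by omega,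
      show (0:ℕ)-1 = 0 by omega, show f+1-1 = f by omega,
      smul_eq_mul, nsmul_eq_mul]
    push_cast
    ring
  · simp only [show e+1+0+1-(e+1) = 1 by omega, show e+1+0-(e+1) = 0 by omega,
      show e+1-1 = e by omega, show (0:ℕ)-1 = 0 by omega]
    rw [mono_eq (show e+1+0+1 = e + 2 by omega), mono_eq (show e+1+0+1 = (e+1) + 1 by omega),
      mono_eq (show e+1+0+1 = (e+1+1) + 0 by omega)]
    simp only [smul_eq_mul, nsmul_eq_mul]
    push_cast
    ring
  · simp only [show e+1+(f+1)+1-(e+1) = f+2 by omega, show e+1+(f+1)-(e+1) = f+1 by omega,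
      show e+1-1 = e by omega, show f+1-1 = f by omega]
    rw [mono_eq (show e+1+(f+1)+1 = e + (f+3) by omega),
      mono_eq (show e+1+(f+1)+1 = (e+1) + (f+2) by omega),
      mono_eq (show e+1+(f+1)+1 = (e+1+1) + (f+1) by omega),
      mono_eq (show e+1+(f+1)+1 = (e+1+2) + f by omega)]
    simp only [smul_eq_mul, nsmul_eq_mul]
    push_cast
    ring

lemma good_sum {M : Type*} [AddCommMonoid M] (p : ℕ) (g : ℕ → M) (a c : ℕ) :
    ∑ s : Bool, g (a + if good p s then c else 0) = g a + g (a + c) := by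
  rcases Nat.even_or_odd p with h | h
  · rw [Fintype.sum_bool, if_neg (by simp [good, h]), if_pos (by simp [good, h]), add_zero,
      add_comm]
  · rw [Fintype.sum_bool, if_pos (by simp [good, Nat.even_iff, Nat.odd_iff.mp h]),
      if_neg (by simp [good, Nat.even_iff, Nat.odd_iff.mp h]), add_zero]
    exact add_comm _ _

lemma sumIns (σ : BSigned n) :
    ∑ p : Fin (n+1), ∑ s : Bool, mono (n+1) (altdesB (ins σ p s))
      = altdesB σ • mono (n+1) (altdesB σ - 1) + (n+1-altdesB σ) • mono (n+1) (altdesB σ)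
        + (altdesB σ + 1) • mono (n+1) (altdesB σ + 1)
        + (n - altdesB σ) • mono (n+1) (altdesB σ + 2) := by
  have hdn : altdesB σ ≤ n := altdes_le σ
  set d := altdesB σ with hd
  rw [Fin.sum_univ_castSucc]
  have hlast : ∑ s : Bool, mono (n+1) (altdesB (ins σ (Fin.last n) s))
      = mono (n+1) d + mono (n+1) (d+1) := by
    calc ∑ s : Bool, mono (n+1) (altdesB (ins σ (Fin.last n) s))
        = ∑ s : Bool, mono (n+1) (d + if good n s then 1 else 0) := by
          refine Fintype.sum_congr _ _ fun s => ?_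
          rw [altdes_ins_last, hd]
      _ = mono (n+1) d + mono (n+1) (d+1) := good_sum n (mono (n+1)) d 1
  have hmid : ∀ i : Fin n, ∑ s : Bool, mono (n+1) (altdesB (ins σ i.castSucc s))
      = if condB σ (i : ℕ) then mono (n+1) (d-1) + mono (n+1) (d+1)
        else mono (n+1) d + mono (n+1) (d+2) := by
    intro i
    have hin : (i : ℕ) < n := i.is_lt
    have hsplit := altdes_split σ i hin
    have hstep : ∀ s : Bool, altdesB (ins σ i.castSucc s)
        = ((range (i:ℕ)).filter (condB σ)).card + ((Ico ((i:ℕ)+1) n).filter (condB σ)).card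
          + if good (i : ℕ) s then 2 else 0 := fun s => by
      have := altdes_ins σ i.castSucc s (by simpa using hin)
      simpa using this
    set A := ((range (i:ℕ)).filter (condB σ)).card with hA
    set S := ((Ico ((i:ℕ)+1) n).filter (condB σ)).card with hS
    by_cases hc : condB σ (i : ℕ)
    · rw [if_pos hc] at hsplit ⊢
      have hAS : A + S = d - 1 ∧ 1 ≤ d := by omega
      calc ∑ s : Bool, mono (n+1) (altdesB (ins σ i.castSucc s))
          = ∑ s : Bool, mono (n+1) ((d-1) + if good (i:ℕ) s then 2 else 0) := by
            refine Fintype.sum_congr _ _ fun s => ?_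
            rw [hstep s]
            congr 1
            omega
        _ = mono (n+1) (d-1) + mono (n+1) ((d-1)+2) := good_sum (i : ℕ) (mono (n+1)) (d-1) 2
        _ = mono (n+1) (d-1) + mono (n+1) (d+1) := by rw [show d-1+2 = d+1 by omega]
    · rw [if_neg hc] at hsplit ⊢
      calc ∑ s : Bool, mono (n+1) (altdesB (ins σ i.castSucc s))
          = ∑ s : Bool, mono (n+1) (d + if good (i:ℕ) s then 2 else 0) := by
            refine Fintype.sum_congr _ _ fun s => ?_
            rw [hstep s]
            congr 1
            omega
        _ = mono (n+1) d + mono (n+1) (d+2) := good_sum (i : ℕ) (mono (n+1)) d 2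
  rw [Finset.sum_congr rfl (fun i _ => hmid i), hlast,
    Fin.sum_univ_eq_sum_range (fun j => if condB σ j then mono (n+1) (d-1) + mono (n+1) (d+1)
      else mono (n+1) d + mono (n+1) (d+2)) n,
    Finset.sum_ite, Finset.sum_const, Finset.sum_const, ← altdes_eq, ← hd]
  have hcard : (filter (fun x => ¬ condB σ x) (range n)).card = n - d := by
    have h2 := Finset.card_filter_add_card_filter_not (s := range n) (p := condB σ)
    rw [← altdes_eq, ← hd, card_range] at h2
    omega
  rw [hcard, show n+1-d = (n-d)+1 by omega]
  simp only [smul_add, succ_nsmul]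
  abel

/-- The generating polynomial `Σ_σ x^{altdes σ} y^{n - altdes σ}`. -/
noncomputable def W (n : ℕ) : MvPolynomial (Fin 3) ℚ := ∑ σ : BSigned n, mono n (altdesB σ)

lemma W_zero : W 0 = 1 := by
  rw [W]
  have h1 : ∀ σ : BSigned 0, mono 0 (altdesB σ) = 1 := fun σ => by
    have h0 : altdesB σ = 0 := by simp [altdesB]
    rw [h0, mono]
    simp
  rw [Finset.sum_congr rfl (fun σ _ => h1 σ), Finset.sum_const, card_univ]
  simp [Fintype.card_perm]

lemma W_step (D : Derivation ℚ (MvPolynomial (Fin 3) ℚ) (MvPolynomial (Fin 3) ℚ))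
    (hx : D (X 1) = X 1 ^ 2 + X 2 ^ 2) (hy : D (X 2) = X 1 ^ 2 + X 2 ^ 2) (n : ℕ) :
    D (W n) + (X 1 + X 2) * W n = W (n + 1) := by
  have hL : D (W n) + (X 1 + X 2) * W n
      = ∑ σ : BSigned n, (D (mono n (altdesB σ)) + (X 1 + X 2) * mono n (altdesB σ)) := by
    rw [W, map_sum, Finset.mul_sum, ← Finset.sum_add_distrib]
  rw [hL, Finset.sum_congr rfl (fun σ _ => Dmono D hx hy (altdes_le σ)),
    Finset.sum_congr rfl (fun σ _ => (sumIns σ).symm)]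
  rw [W, ← Fintype.sum_bijective insFun insFun_bijective _ _ (fun x => rfl)]
  conv_rhs => rw [Fintype.sum_prod_type]
  refine Finset.sum_congr rfl fun σ _ => ?_
  rw [Fintype.sum_prod_type]
  rfl

lemma W_eq (n : ℕ) : W n = ∑ k ∈ Finset.range (n + 1),
    MvPolynomial.C ((Bhat n k : ℚ)) * MvPolynomial.X 1 ^ k * MvPolynomial.X 2 ^ (n - k) := by
  rw [W, ← Finset.sum_fiberwise_of_maps_to (g := altdesB)
    (fun σ _ => Finset.mem_range.mpr (Nat.lt_succ_of_le (altdes_le σ)))]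
  refine Finset.sum_congr rfl fun k _ => ?_
  have h1 : ∀ σ ∈ Finset.univ.filter (fun σ : BSigned n => altdesB σ = k),
      mono n (altdesB σ) = mono n k := fun σ hσ => by
    rw [(Finset.mem_filter.mp hσ).2]
  rw [Finset.sum_congr rfl h1, Finset.sum_const]
  have h2 : (Finset.univ.filter (fun σ : BSigned n => altdesB σ = k)).card = Bhat n k := rfl
  rw [h2, mono, nsmul_eq_mul, ← mul_assoc,
    ← map_natCast (C : ℚ →+* MvPolynomial (Fin 3) ℚ) (Bhat n k)]

end Stmt1Aux


/-- grammatical interpretation of the type B alternating Eulerian numbers.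
For the derivation `D` on `ℚ[e,x,y]` with `D e = e(x+y)`, `D x = D y = x²+y²`
(here `e = X 0`, `x = X 1`, `y = X 2`), one has
`Dⁿ(e) = e · Σ_{k=0}^n B̂(n,k) x^k y^{n-k}` for all `n ≥ 0`. -/
theorem stmt1 (D : Derivation ℚ (MvPolynomial (Fin 3) ℚ) (MvPolynomial (Fin 3) ℚ))
    (he : D (MvPolynomial.X 0) = MvPolynomial.X 0 * (MvPolynomial.X 1 + MvPolynomial.X 2))
    (hx : D (MvPolynomial.X 1) = MvPolynomial.X 1 ^ 2 + MvPolynomial.X 2 ^ 2)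
    (hy : D (MvPolynomial.X 2) = MvPolynomial.X 1 ^ 2 + MvPolynomial.X 2 ^ 2) :
    ∀ n : ℕ,
      (⇑D)^[n] (MvPolynomial.X 0) =
        MvPolynomial.X 0 * ∑ k ∈ Finset.range (n + 1),
          MvPolynomial.C ((Bhat n k : ℚ)) *
            MvPolynomial.X 1 ^ k * MvPolynomial.X 2 ^ (n - k) := by
  have key : ∀ n : ℕ, (⇑D)^[n] (MvPolynomial.X 0) = MvPolynomial.X 0 * Stmt1Aux.W n := by
    intro n
    induction n with
    | zero => simp [Stmt1Aux.W_zero]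
    | succ m ih =>
      rw [Function.iterate_succ_apply', ih, Derivation.leibniz, he, smul_eq_mul, smul_eq_mul,
        ← Stmt1Aux.W_step D hx hy m]
      ring
  intro n
  rw [key n, Stmt1Aux.W_eq n]
end

section
/- The type B alternating Eulerian numbers satisfy the recurrence B̂(n+1,k) = (k+1)·B̂(n,k+1) + k·B̂(n,k−1) + (n−k+1)·B̂(n,k) + (n−k+2)·B̂(n,k−2) for all n ≥ 1 and k ≥ 0 (terms with negative second argument being 0), with initial conditions B̂(1,0) = B̂(1,1) = 1 and B̂(1,k) = 0 for k > 1. -/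
open Finset

/-- `B̂(n,k)` extended to integer second argument (zero for negative arguments). -/
def BhatZ (n : ℕ) (k : ℤ) : ℤ := if 0 ≤ k then (Bhat n k.toNat : ℤ) else 0

-- descent condition on a pair
def dcond (j : ℕ) (a b : ℤ) : Prop := (Even j ∧ a < b) ∨ (Odd j ∧ b < a)

instance (j : ℕ) (a b : ℤ) : Decidable (dcond j a b) := by unfold dcond; infer_instance

def dB {n : ℕ} (σ : BSigned n) (j : ℕ) : Prop := dcond j (bword σ j) (bword σ (j+1))

instance {n : ℕ} (σ : BSigned n) (j : ℕ) : Decidable (dB σ j) := by unfold dB; infer_instance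

lemma altdesB_eq {n : ℕ} (σ : BSigned n) :
    altdesB σ = ((Finset.range n).filter (dB σ)).card := rfl

lemma dcond_succ_flip (j : ℕ) {a b : ℤ} (h : a ≠ b) : dcond (j+1) a b ↔ ¬ dcond j a b := by
  rcases Nat.even_or_odd j with he | ho <;>
  · rcases lt_trichotomy a b with h3 | h3 | h3 <;>
      simp_all [dcond, Nat.even_iff, Nat.odd_iff, Nat.add_mod] <;> omega

lemma dcond_neg_flip (j : ℕ) {a b : ℤ} (h : a ≠ b) : dcond j (-a) (-b) ↔ ¬ dcond j a b := by
  rcases Nat.even_or_odd j with he | ho <;>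
  · rcases lt_trichotomy a b with h3 | h3 | h3 <;>
      simp_all [dcond, Nat.even_iff, Nat.odd_iff] <;> omega

def sval (n : ℕ) (s : Bool) : ℤ := (if s then -1 else 1) * (n + 1)

def ins {n : ℕ} (σ : BSigned n) (p : Fin (n+1)) (s : Bool) : BSigned (n+1) :=
  ((finSuccEquiv' p).trans ((Equiv.optionCongr σ.1).trans (finSuccEquiv' (Fin.last n)).symm),
   p.insertNth s σ.2)

lemma ins_apply_self {n : ℕ} (σ : BSigned n) (p : Fin (n+1)) (s : Bool) :
    (ins σ p s).1 p = Fin.last n := by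
  simp [ins, finSuccEquiv'_at, finSuccEquiv'_symm_none]

lemma ins_apply_succAbove {n : ℕ} (σ : BSigned n) (p : Fin (n+1)) (s : Bool) (j : Fin n) :
    (ins σ p s).1 (p.succAbove j) = Fin.castSucc (σ.1 j) := by
  simp [ins, finSuccEquiv'_succAbove, finSuccEquiv'_symm_some, Fin.succAbove_last]

lemma ins_sign_self {n : ℕ} (σ : BSigned n) (p : Fin (n+1)) (s : Bool) :
    (ins σ p s).2 p = s :=
  Fin.insertNth_apply_same (α := fun _ => Bool) p s σ.2

lemma ins_sign_succAbove {n : ℕ} (σ : BSigned n) (p : Fin (n+1)) (s : Bool) (j : Fin n) :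
    (ins σ p s).2 (p.succAbove j) = σ.2 j :=
  Fin.insertNth_apply_succAbove (α := fun _ => Bool) p s σ.2 j

lemma bword_ins {n : ℕ} (σ : BSigned n) (p : Fin (n+1)) (s : Bool) (j : ℕ) :
    bword (ins σ p s) j =
      if j ≤ (p : ℕ) then bword σ j
      else if j = (p : ℕ) + 1 then sval n s
      else bword σ (j - 1) := by
  have hp := p.isLt
  split_ifs with hA hB
  · -- j ≤ p : unchanged
    rcases Nat.eq_zero_or_pos j with rfl | h1
    · rw [bword, bword, dif_neg (by omega), dif_neg (by omega)]
    have hjn : j - 1 < n := by omega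
    have hidx : (⟨j-1, by omega⟩ : Fin (n+1)) = p.succAbove ⟨j-1, hjn⟩ := by
      rw [Fin.succAbove_of_castSucc_lt]
      · rfl
      · rw [Fin.lt_def]; simpa using by omega
    rw [bword, dif_pos (by omega), hidx, ins_apply_succAbove, ins_sign_succAbove,
      bword, dif_pos (by omega)]
    simp [Fin.coe_castSucc]
  · -- j = p + 1
    have hidx : (⟨j-1, by omega⟩ : Fin (n+1)) = p := by
      apply Fin.ext; simp; omega
    rw [bword, dif_pos (by omega), hidx, ins_apply_self, ins_sign_self, sval]
    simp [Fin.val_last]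
  · -- j ≥ p + 2
    rcases Nat.lt_or_ge (n+1) j with h2 | h2
    · rw [bword, dif_neg (by omega), bword, dif_neg (by omega)]
    have hjn : j - 2 < n := by omega
    have hidx : (⟨j-1, by omega⟩ : Fin (n+1)) = p.succAbove ⟨j-2, hjn⟩ := by
      rw [Fin.succAbove_of_le_castSucc]
      · apply Fin.ext; simp [Fin.val_succ]; omega
      · rw [Fin.le_def]; simpa using by omega
    rw [bword, dif_pos (by omega), hidx, ins_apply_succAbove, ins_sign_succAbove,
      bword, dif_pos (by omega)]
    have h3 : (⟨j-1-1, by omega⟩ : Fin n) = ⟨j-2, hjn⟩ := by apply Fin.ext; simp; omega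
    rw [h3]
    simp [Fin.coe_castSucc]

lemma sign_bound {n : ℕ} (b : Bool) (v : Fin n) :
    -((n:ℤ)+1) < (if b then (-1:ℤ) else 1) * ((v:ℕ)+1) ∧
      (if b then (-1:ℤ) else 1) * ((v:ℕ)+1) < (n:ℤ)+1 := by
  have := v.isLt
  cases b <;> simp <;> omega

lemma bword_lt {n : ℕ} (σ : BSigned n) (j : ℕ) :
    -((n:ℤ)+1) < bword σ j ∧ bword σ j < (n:ℤ)+1 := by
  rw [bword]
  by_cases h : 1 ≤ j ∧ j ≤ n
  · rw [dif_pos h]; exact sign_bound _ _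
  · rw [dif_neg h]; omega

lemma sign_inj {n : ℕ} (b1 b2 : Bool) (v1 v2 : Fin n)
    (h : (if b1 then (-1:ℤ) else 1) * ((v1:ℕ)+1) = (if b2 then (-1:ℤ) else 1) * ((v2:ℕ)+1)) :
    v1 = v2 := by
  have := v1.isLt
  have := v2.isLt
  apply Fin.ext
  cases b1 <;> cases b2 <;> simp at h <;> omega

lemma bword_ne {n : ℕ} (σ : BSigned n) {j : ℕ} (h : j < n) : bword σ j ≠ bword σ (j+1) := by
  rcases Nat.eq_zero_or_pos j with rfl | hj
  · have h0 : bword σ 0 = 0 := by rw [bword]; rw [dif_neg (by omega)]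
    rw [h0, bword, dif_pos (by omega)]
    intro heq
    rcases sign_bound (σ.2 ⟨1-1, by omega⟩) (σ.1 ⟨1-1, by omega⟩) with _
    cases hb : (σ.2 ⟨1-1, by omega⟩) <;> rw [hb] at heq <;> simp at heq <;> omega
  · rw [bword, bword, dif_pos (by omega), dif_pos (by omega)]
    intro heq
    have h3 := σ.1.injective (sign_inj _ _ _ _ heq)
    have h4 := congrArg Fin.val h3
    simp at h4
    omega

/-! ### bflip -/

def bflip {n : ℕ} (σ : BSigned n) (p : ℕ) : BSigned n :=
  (σ.1, fun i => if p ≤ (i : ℕ) then !(σ.2 i) else σ.2 i)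

lemma neg_sign (b : Bool) (x : ℤ) :
    (if !b then (-1:ℤ) else 1) * x = -((if b then (-1:ℤ) else 1) * x) := by
  cases b <;> simp <;> ring

lemma bword_bflip {n : ℕ} (σ : BSigned n) (p j : ℕ) :
    bword (bflip σ p) j = if j ≤ p then bword σ j else -(bword σ j) := by
  by_cases h : 1 ≤ j ∧ j ≤ n
  · rw [bword, bword, dif_pos h, dif_pos h]
    by_cases hj : j ≤ p
    · rw [if_pos hj]
      have hs : (bflip σ p).2 ⟨j-1, by omega⟩ = σ.2 ⟨j-1, by omega⟩ := by
        simp only [bflip]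
        exact if_neg (by omega : ¬ p ≤ j - 1)
      rw [hs]
      rfl
    · rw [if_neg hj]
      have hs : (bflip σ p).2 ⟨j-1, by omega⟩ = !(σ.2 ⟨j-1, by omega⟩) := by
        simp only [bflip]
        exact if_pos (by omega : p ≤ j - 1)
      rw [hs]
      exact neg_sign _ _
  · rw [bword, bword, dif_neg h, dif_neg h]
    simp

lemma bflip_bflip {n : ℕ} (σ : BSigned n) (p : ℕ) : bflip (bflip σ p) p = σ := by
  apply Prod.ext
  · rfl
  · funext i
    show (if p ≤ (i:ℕ) then !(if p ≤ (i:ℕ) then !(σ.2 i) else σ.2 i)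
        else (if p ≤ (i:ℕ) then !(σ.2 i) else σ.2 i)) = σ.2 i
    by_cases h : p ≤ (i : ℕ)
    · rw [if_pos h, if_pos h]; simp
    · rw [if_neg h, if_neg h]

/-! ### the statistics -/

def Lval {n : ℕ} (σ : BSigned n) (p : ℕ) : ℕ := ((range p).filter (dB σ)).card

def Tval {n : ℕ} (σ : BSigned n) (p : ℕ) : ℕ :=
  ((Ico (p+1) n).filter (fun j => ¬ dB σ j)).card

def fval {n : ℕ} (σ : BSigned n) (p : ℕ) : ℕ := Lval σ p + Tval σ p

def cval (p : ℕ) (s : Bool) : ℕ :=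
  if (Even p ∧ s = false) ∨ (Odd p ∧ s = true) then 1 else 0

lemma dcond_sval_iff {n : ℕ} (p : ℕ) (s : Bool) {a : ℤ}
    (h1 : -((n:ℤ)+1) < a) (h2 : a < (n:ℤ)+1) :
    dcond p a (sval n s) ↔ ((Even p ∧ s = false) ∨ (Odd p ∧ s = true)) := by
  simp only [dcond, sval, Nat.even_iff, Nat.odd_iff]
  cases s <;> simp <;> omega

lemma dcond_sval_iff' {n : ℕ} (p : ℕ) (s : Bool) {a : ℤ}
    (h1 : -((n:ℤ)+1) < a) (h2 : a < (n:ℤ)+1) :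
    dcond (p+1) (sval n s) a ↔ ((Even p ∧ s = false) ∨ (Odd p ∧ s = true)) := by
  simp only [dcond, sval, Nat.even_iff, Nat.odd_iff]
  cases s <;> simp [Nat.add_mod] <;> omega

/-! ### alternating descents of an insertion -/

lemma dB_ins_lt {n : ℕ} (σ : BSigned n) (p : Fin (n+1)) (s : Bool) {j : ℕ}
    (hj : j < (p:ℕ)) : dB (ins σ p s) j ↔ dB σ j := by
  unfold dB
  rw [bword_ins, bword_ins, if_pos (by omega), if_pos (by omega)]

lemma dB_ins_at {n : ℕ} (σ : BSigned n) (p : Fin (n+1)) (s : Bool) :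
    dB (ins σ p s) (p:ℕ) ↔ ((Even (p:ℕ) ∧ s = false) ∨ (Odd (p:ℕ) ∧ s = true)) := by
  unfold dB
  rw [bword_ins, bword_ins, if_pos (le_refl _), if_neg (by omega), if_pos rfl]
  exact dcond_sval_iff _ _ (bword_lt σ p).1 (bword_lt σ p).2

lemma dB_ins_at' {n : ℕ} (σ : BSigned n) (p : Fin (n+1)) (s : Bool) :
    dB (ins σ p s) ((p:ℕ)+1) ↔ ((Even (p:ℕ) ∧ s = false) ∨ (Odd (p:ℕ) ∧ s = true)) := by
  unfold dB
  rw [bword_ins, bword_ins, if_neg (by omega), if_pos rfl, if_neg (by omega),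
    if_neg (by omega)]
  have h : (p:ℕ) + 1 + 1 - 1 = (p:ℕ) + 1 := by omega
  rw [h]
  exact dcond_sval_iff' _ _ (bword_lt σ ((p:ℕ)+1)).1 (bword_lt σ ((p:ℕ)+1)).2

lemma dB_ins_tail {n : ℕ} (σ : BSigned n) (p : Fin (n+1)) (s : Bool) {m : ℕ}
    (hm1 : (p:ℕ) + 1 ≤ m) (hm2 : m < n) : dB (ins σ p s) (m+1) ↔ ¬ dB σ m := by
  unfold dB
  rw [bword_ins, bword_ins, if_neg (by omega), if_neg (by omega),
    if_neg (by omega), if_neg (by omega)]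
  have h1 : m + 1 - 1 = m := by omega
  have h2 : m + 1 + 1 - 1 = m + 1 := by omega
  rw [h1, h2]
  exact dcond_succ_flip m (bword_ne σ hm2)


lemma altdes_ins_lt {n : ℕ} (σ : BSigned n) (p : Fin (n+1)) (s : Bool) (hp : (p:ℕ) < n) :
    altdesB (ins σ p s) = fval σ (p:ℕ) + 2 * cval (p:ℕ) s := by
  have hcard : altdesB (ins σ p s) = ∑ j ∈ range (n+1), if dB (ins σ p s) j then 1 else 0 := by
    rw [altdesB_eq, Finset.card_filter]
  rw [hcard]
  have hsplit1 : ∑ j ∈ range (n+1), (if dB (ins σ p s) j then 1 else 0) =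
      (∑ j ∈ Ico 0 (p:ℕ), if dB (ins σ p s) j then 1 else 0)
      + ∑ j ∈ Ico (p:ℕ) (n+1), if dB (ins σ p s) j then 1 else 0 := by
    rw [Finset.range_eq_Ico, ← Finset.sum_Ico_consecutive _ (show 0 ≤ (p:ℕ) by omega) (show (p:ℕ) ≤ n+1 by omega)]
  have hsplit2 : ∑ j ∈ Ico (p:ℕ) (n+1), (if dB (ins σ p s) j then 1 else 0) =
      (∑ j ∈ Ico (p:ℕ) ((p:ℕ)+2), if dB (ins σ p s) j then 1 else 0)
      + ∑ j ∈ Ico ((p:ℕ)+2) (n+1), if dB (ins σ p s) j then 1 else 0 := by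
    rw [← Finset.sum_Ico_consecutive _ (show (p:ℕ) ≤ (p:ℕ)+2 by omega) (show (p:ℕ)+2 ≤ n+1 by omega)]
  rw [hsplit1, hsplit2]
  have e1 : (∑ j ∈ Ico 0 (p:ℕ), if dB (ins σ p s) j then 1 else 0) = Lval σ (p:ℕ) := by
    rw [Lval, Finset.card_filter, Finset.range_eq_Ico]
    apply Finset.sum_congr rfl
    intro j hj
    rw [Finset.mem_Ico] at hj
    simp only [dB_ins_lt σ p s hj.2]
  have e2 : (∑ j ∈ Ico (p:ℕ) ((p:ℕ)+2), if dB (ins σ p s) j then 1 else 0)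
      = 2 * cval (p:ℕ) s := by
    have : Ico (p:ℕ) ((p:ℕ)+2) = {(p:ℕ), (p:ℕ)+1} := by
      ext x
      simp [Finset.mem_Ico]
      omega
    rw [this, Finset.sum_insert (by simp), Finset.sum_singleton]
    by_cases hc : ((Even (p:ℕ) ∧ s = false) ∨ (Odd (p:ℕ) ∧ s = true))
    · rw [if_pos ((dB_ins_at σ p s).mpr hc), if_pos ((dB_ins_at' σ p s).mpr hc),
        cval, if_pos hc]
    · rw [if_neg (fun h => hc ((dB_ins_at σ p s).mp h)),
        if_neg (fun h => hc ((dB_ins_at' σ p s).mp h)), cval, if_neg hc]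
  have e3 : (∑ j ∈ Ico ((p:ℕ)+2) (n+1), if dB (ins σ p s) j then 1 else 0)
      = Tval σ (p:ℕ) := by
    rw [Tval, Finset.card_filter]
    rw [Finset.sum_Ico_eq_sum_range, Finset.sum_Ico_eq_sum_range]
    have hlen : n + 1 - ((p:ℕ)+2) = n - ((p:ℕ)+1) := by omega
    rw [hlen]
    apply Finset.sum_congr rfl
    intro i hi
    rw [Finset.mem_range] at hi
    have h1 : (p:ℕ)+2+i = ((p:ℕ)+1+i)+1 := by omega
    rw [h1]
    simp only [dB_ins_tail σ p s (show (p:ℕ)+1 ≤ (p:ℕ)+1+i by omega)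
      (show (p:ℕ)+1+i < n by omega)]
  rw [e1, e2, e3, fval]
  ring

lemma altdes_ins_last {n : ℕ} (σ : BSigned n) (s : Bool) :
    altdesB (ins σ (Fin.last n) s) = altdesB σ + cval n s := by
  have hcard : altdesB (ins σ (Fin.last n) s)
      = ∑ j ∈ range (n+1), if dB (ins σ (Fin.last n) s) j then 1 else 0 := by
    rw [altdesB_eq, Finset.card_filter]
  rw [hcard, Finset.sum_range_succ]
  have e1 : (∑ j ∈ range n, if dB (ins σ (Fin.last n) s) j then 1 else 0) = altdesB σ := by
    rw [altdesB_eq, Finset.card_filter]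
    apply Finset.sum_congr rfl
    intro j hj
    rw [Finset.mem_range] at hj
    have : j < ((Fin.last n : Fin (n+1)) : ℕ) := by simpa [Fin.val_last] using hj
    simp only [dB_ins_lt σ (Fin.last n) s this]
  rw [e1]
  congr 1
  have := dB_ins_at σ (Fin.last n) s
  rw [Fin.val_last] at this
  by_cases hc : ((Even n ∧ s = false) ∨ (Odd n ∧ s = true))
  · rw [if_pos (this.mpr hc), cval, if_pos hc]
  · rw [if_neg (fun h => hc (this.mp h)), cval, if_neg hc]

/-! ### counting -/

lemma altdesB_le {n : ℕ} (σ : BSigned n) : altdesB σ ≤ n := by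
  rw [altdesB_eq]
  exact le_trans (Finset.card_filter_le _ _) (by simp)

lemma altdes_bflip {n : ℕ} (σ : BSigned n) {p : ℕ} (hp : p < n) :
    altdesB (bflip σ p) = fval σ p + (if dB (bflip σ p) p then 1 else 0) := by
  have hcard : altdesB (bflip σ p) = ∑ j ∈ range n, if dB (bflip σ p) j then 1 else 0 := by
    rw [altdesB_eq, Finset.card_filter]
  rw [hcard]
  have hsplit1 : (∑ j ∈ range n, if dB (bflip σ p) j then 1 else 0)
      = (∑ j ∈ Ico 0 p, if dB (bflip σ p) j then 1 else 0)
        + ∑ j ∈ Ico p n, if dB (bflip σ p) j then 1 else 0 := by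
    rw [Finset.range_eq_Ico,
      ← Finset.sum_Ico_consecutive _ (show 0 ≤ p by omega) (show p ≤ n by omega)]
  have hsplit2 : (∑ j ∈ Ico p n, if dB (bflip σ p) j then 1 else 0)
      = (if dB (bflip σ p) p then 1 else 0)
        + ∑ j ∈ Ico (p+1) n, if dB (bflip σ p) j then 1 else 0 :=
    Finset.sum_eq_sum_Ico_succ_bot hp _
  rw [hsplit1, hsplit2]
  have e1 : (∑ j ∈ Ico 0 p, if dB (bflip σ p) j then 1 else 0) = Lval σ p := by
    rw [Lval, Finset.card_filter, Finset.range_eq_Ico]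
    apply Finset.sum_congr rfl
    intro j hj
    rw [Finset.mem_Ico] at hj
    have hiff : dB (bflip σ p) j ↔ dB σ j := by
      unfold dB
      rw [bword_bflip, bword_bflip, if_pos (by omega), if_pos (by omega)]
    simp only [hiff]
  have e3 : (∑ j ∈ Ico (p+1) n, if dB (bflip σ p) j then 1 else 0) = Tval σ p := by
    rw [Tval, Finset.card_filter]
    apply Finset.sum_congr rfl
    intro j hj
    rw [Finset.mem_Ico] at hj
    have hiff : dB (bflip σ p) j ↔ ¬ dB σ j := by
      unfold dB
      rw [bword_bflip, bword_bflip, if_neg (by omega), if_neg (by omega)]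
      exact dcond_neg_flip j (bword_ne σ hj.2)
    simp only [hiff]
  rw [e1, e3, fval]
  ring

def bflipEquiv (n : ℕ) (p : ℕ) : BSigned n ≃ BSigned n where
  toFun σ := bflip σ p
  invFun σ := bflip σ p
  left_inv σ := bflip_bflip σ p
  right_inv σ := bflip_bflip σ p

lemma count_w (n : ℕ) (w c : ℤ) :
    (∑ π : BSigned n, if (altdesB π : ℤ) = w then c else 0) = c * BhatZ n w := by
  have h1 : (∑ π : BSigned n, if (altdesB π : ℤ) = w then c else 0)
      = c * ∑ π : BSigned n, if (altdesB π : ℤ) = w then (1:ℤ) else 0 := by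
    rw [Finset.mul_sum]
    apply Finset.sum_congr rfl
    intro π _
    by_cases h : (altdesB π : ℤ) = w <;> simp [h]
  rw [h1]
  congr 1
  rcases le_or_gt 0 w with hw | hw
  · rw [Finset.sum_boole, BhatZ, if_pos hw, Bhat]
    congr 1
    apply congrArg
    apply Finset.filter_congr
    intro π _
    first
    | omega
    | exact propext (by omega)
  · rw [BhatZ, if_neg (by omega)]
    have h2 : ∀ π : BSigned n, ¬ ((altdesB π : ℤ) = w) := by intro π; omega
    simp [h2]

lemma FZ (n : ℕ) (v : ℤ) :
    (∑ σ : BSigned n, ∑ p ∈ range n, if (fval σ p : ℤ) = v then (1:ℤ) else 0)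
      = (v+1) * BhatZ n (v+1) + ((n:ℤ) - v) * BhatZ n v := by
  rw [Finset.sum_comm]
  have step1 : ∀ p ∈ range n,
      (∑ σ : BSigned n, if (fval σ p : ℤ) = v then (1:ℤ) else 0)
      = ∑ π : BSigned n,
          if (altdesB π : ℤ) = v + (if dB π p then 1 else 0) then (1:ℤ) else 0 := by
    intro p hp
    rw [Finset.mem_range] at hp
    rw [← Equiv.sum_comp (bflipEquiv n p)
      (fun π => if (altdesB π : ℤ) = v + (if dB π p then 1 else 0) then (1:ℤ) else 0)]
    apply Finset.sum_congr rfl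
    intro σ _
    have h2 := altdes_bflip σ hp
    have hcond : ((altdesB (bflip σ p) : ℤ)
        = v + (if dB (bflip σ p) p then 1 else 0)) ↔ ((fval σ p : ℤ) = v) := by
      by_cases hd : dB (bflip σ p) p
      · rw [if_pos hd] at h2 ⊢; rw [h2]; push_cast; omega
      · rw [if_neg hd] at h2 ⊢; rw [h2]; push_cast; omega
    exact (if_congr hcond rfl rfl).symm
  rw [Finset.sum_congr rfl step1, Finset.sum_comm]
  have haltle : ∀ π : BSigned n, altdesB π ≤ n := fun π => altdesB_le π
  have step2 : ∀ π : BSigned n,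
      (∑ p ∈ range n, if (altdesB π : ℤ) = v + (if dB π p then 1 else 0) then (1:ℤ) else 0)
      = (if (altdesB π : ℤ) = v + 1 then (v+1 : ℤ) else 0)
        + (if (altdesB π : ℤ) = v then (n:ℤ) - v else 0) := by
    intro π
    rw [← Finset.sum_filter_add_sum_filter_not (range n) (dB π)]
    congr 1
    · have hc : ∀ p ∈ (range n).filter (dB π),
          (if (altdesB π : ℤ) = v + (if dB π p then 1 else 0) then (1:ℤ) else 0)
          = (if (altdesB π : ℤ) = v + 1 then (1:ℤ) else 0) := by
        intro p hp
        rw [if_pos (Finset.mem_filter.mp hp).2]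
      rw [Finset.sum_congr rfl hc, Finset.sum_const, ← altdesB_eq, nsmul_eq_mul]
      by_cases h : (altdesB π : ℤ) = v + 1
      · rw [if_pos h, if_pos h, mul_one]; omega
      · rw [if_neg h, if_neg h, mul_zero]
    · have hc : ∀ p ∈ (range n).filter (fun p => ¬ dB π p),
          (if (altdesB π : ℤ) = v + (if dB π p then 1 else 0) then (1:ℤ) else 0)
          = (if (altdesB π : ℤ) = v then (1:ℤ) else 0) := by
        intro p hp
        rw [if_neg (Finset.mem_filter.mp hp).2, add_zero]
      rw [Finset.sum_congr rfl hc, Finset.sum_const, nsmul_eq_mul]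
      have hcard : (((range n).filter (fun p => ¬ dB π p)).card : ℤ)
          = (n : ℤ) - altdesB π := by
        have := Finset.card_filter_add_card_filter_not (s := range n) (p := dB π)
        rw [Finset.card_range] at this
        rw [altdesB_eq]
        omega
      rw [hcard]
      by_cases h : (altdesB π : ℤ) = v
      · rw [if_pos h, if_pos h, mul_one]; omega
      · rw [if_neg h, if_neg h, mul_zero]
  rw [Finset.sum_congr rfl (fun π _ => step2 π), Finset.sum_add_distrib]
  rw [count_w, count_w]

/-! ### the insertion bijection -/

lemma card_BSigned (n : ℕ) : Fintype.card (BSigned n) = n.factorial * 2^n := by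
  rw [show Fintype.card (BSigned n) = Fintype.card (Equiv.Perm (Fin n)) * Fintype.card (Fin n → Bool)
    from Fintype.card_prod _ _]
  rw [Fintype.card_perm, Fintype.card_fin, Fintype.card_fun]
  simp

lemma ins_bijective (n : ℕ) :
    Function.Bijective (fun x : BSigned n × Fin (n+1) × Bool => ins x.1 x.2.1 x.2.2) := by
  rw [Fintype.bijective_iff_injective_and_card]
  constructor
  · rintro ⟨σ, p, s⟩ ⟨σ', p', s'⟩ h
    simp only at h
    have hp : p = p' := by
      apply (ins σ' p' s').1.injective
      have h1 : (ins σ' p' s').1 p = Fin.last n := by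
        rw [← h]; exact ins_apply_self σ p s
      rw [h1, ins_apply_self]
    subst hp
    have e1 : σ.1 = σ'.1 := by
      apply Equiv.ext; intro j
      apply Fin.castSucc_injective
      rw [← ins_apply_succAbove σ p s j, ← ins_apply_succAbove σ' p s' j, h]
    have e2 : σ.2 = σ'.2 := by
      funext j
      rw [← ins_sign_succAbove σ p s j, ← ins_sign_succAbove σ' p s' j, h]
    have e3 : s = s' := by
      rw [← ins_sign_self σ p s, ← ins_sign_self σ' p s', h]
    have e4 : σ = σ' := Prod.ext e1 e2
    rw [e4, e3]
  · simp only [Fintype.card_prod, Fintype.card_perm, Fintype.card_fun,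
      Fintype.card_fin, Fintype.card_bool]
    rw [Nat.factorial_succ, pow_succ]
    ring

noncomputable def insEquiv (n : ℕ) : (BSigned n × Fin (n+1) × Bool) ≃ BSigned (n+1) :=
  Equiv.ofBijective _ (ins_bijective n)

lemma Bhat_succ_sum (n m : ℕ) :
    (Bhat (n+1) m : ℤ) = ∑ σ : BSigned n, ∑ p : Fin (n+1), ∑ s : Bool,
      if altdesB (ins σ p s) = m then (1:ℤ) else 0 := by
  rw [Bhat, ← Finset.sum_boole]
  rw [← Equiv.sum_comp (insEquiv n) (fun τ => if altdesB τ = m then (1:ℤ) else 0)]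
  rw [Fintype.sum_prod_type]
  apply Finset.sum_congr rfl
  intro σ _
  rw [Fintype.sum_prod_type]
  rfl

lemma cval_true (p : ℕ) : cval p true = if Odd p then 1 else 0 := by simp [cval]

lemma cval_false (p : ℕ) : cval p false = if Even p then 1 else 0 := by simp [cval]

lemma sum_bool_ite1 (a m p : ℕ) :
    ((if a + cval p true = m then (1:ℤ) else 0) + (if a + cval p false = m then (1:ℤ) else 0))
      = (if a + 1 = m then (1:ℤ) else 0) + (if a = m then (1:ℤ) else 0) := by
  rcases Nat.even_or_odd p with h | h
  · have h2 : ¬ Odd p := by rw [Nat.odd_iff]; rw [Nat.even_iff] at h; omega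
    rw [cval_true, cval_false, if_neg h2, if_pos h]
    simp [add_comm]
  · have h2 : ¬ Even p := by rw [Nat.even_iff]; rw [Nat.odd_iff] at h; omega
    rw [cval_true, cval_false, if_pos h, if_neg h2]
    simp

lemma sum_bool_ite2 (a m p : ℕ) :
    ((if a + 2 * cval p true = m then (1:ℤ) else 0)
        + (if a + 2 * cval p false = m then (1:ℤ) else 0))
      = (if a + 2 = m then (1:ℤ) else 0) + (if a = m then (1:ℤ) else 0) := by
  rcases Nat.even_or_odd p with h | h
  · have h2 : ¬ Odd p := by rw [Nat.odd_iff]; rw [Nat.even_iff] at h; omega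
    rw [cval_true, cval_false, if_neg h2, if_pos h]
    simp [add_comm]
  · have h2 : ¬ Even p := by rw [Nat.even_iff]; rw [Nat.odd_iff] at h; omega
    rw [cval_true, cval_false, if_pos h, if_neg h2]
    simp

lemma Bhat_rec (n m : ℕ) :
    (Bhat (n+1) m : ℤ) = ((m:ℤ)+1) * BhatZ n ((m:ℤ)+1) + (m:ℤ) * BhatZ n ((m:ℤ)-1)
      + ((n:ℤ) - (m:ℤ) + 1) * BhatZ n (m:ℤ) + ((n:ℤ) - (m:ℤ) + 2) * BhatZ n ((m:ℤ)-2) := by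
  rw [Bhat_succ_sum]
  have hσ : ∀ σ : BSigned n, (∑ p : Fin (n+1), ∑ s : Bool,
        if altdesB (ins σ p s) = m then (1:ℤ) else 0)
      = ((if altdesB σ + 1 = m then (1:ℤ) else 0) + (if altdesB σ = m then (1:ℤ) else 0))
        + ∑ i : Fin n, ((if fval σ (i:ℕ) + 2 = m then (1:ℤ) else 0)
            + (if fval σ (i:ℕ) = m then (1:ℤ) else 0)) := by
    intro σ
    rw [Fin.sum_univ_castSucc, add_comm]
    congr 1
    · rw [Fintype.sum_bool, altdes_ins_last, altdes_ins_last]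
      exact sum_bool_ite1 (altdesB σ) m n
    · apply Finset.sum_congr rfl
      intro i _
      rw [Fintype.sum_bool]
      have hlt : ((Fin.castSucc i : Fin (n+1)) : ℕ) < n := by
        rw [Fin.coe_castSucc]; exact i.isLt
      rw [altdes_ins_lt σ (Fin.castSucc i) true hlt, altdes_ins_lt σ (Fin.castSucc i) false hlt,
        Fin.coe_castSucc]
      exact sum_bool_ite2 (fval σ (i:ℕ)) m (i:ℕ)
  rw [Finset.sum_congr rfl (fun σ _ => hσ σ), Finset.sum_add_distrib, Finset.sum_add_distrib]
  have hsplit : (∑ x : BSigned n, ∑ i : Fin n,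
        ((if fval x (i:ℕ) + 2 = m then (1:ℤ) else 0) + (if fval x (i:ℕ) = m then (1:ℤ) else 0)))
      = (∑ x : BSigned n, ∑ i : Fin n, (if fval x (i:ℕ) + 2 = m then (1:ℤ) else 0))
        + ∑ x : BSigned n, ∑ i : Fin n, (if fval x (i:ℕ) = m then (1:ℤ) else 0) := by
    rw [← Finset.sum_add_distrib]
    apply Finset.sum_congr rfl
    intro x _
    rw [← Finset.sum_add_distrib]
  have t1 : (∑ σ : BSigned n, if altdesB σ + 1 = m then (1:ℤ) else 0)
      = BhatZ n ((m:ℤ) - 1) := by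
    have hc : ∀ σ : BSigned n, (if altdesB σ + 1 = m then (1:ℤ) else 0)
        = (if (altdesB σ : ℤ) = (m:ℤ) - 1 then (1:ℤ) else 0) := by
      intro σ
      exact if_congr (by omega) rfl rfl
    rw [Finset.sum_congr rfl (fun σ _ => hc σ), count_w, one_mul]
  have t2 : (∑ σ : BSigned n, if altdesB σ = m then (1:ℤ) else 0) = BhatZ n (m:ℤ) := by
    have hc : ∀ σ : BSigned n, (if altdesB σ = m then (1:ℤ) else 0)
        = (if (altdesB σ : ℤ) = (m:ℤ) then (1:ℤ) else 0) := by
      intro σ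
      exact if_congr (by omega) rfl rfl
    rw [Finset.sum_congr rfl (fun σ _ => hc σ), count_w, one_mul]
  have t3 : (∑ σ : BSigned n, ∑ i : Fin n, if fval σ (i:ℕ) + 2 = m then (1:ℤ) else 0)
      = ((m:ℤ)-1) * BhatZ n ((m:ℤ)-1) + ((n:ℤ) - ((m:ℤ)-2)) * BhatZ n ((m:ℤ)-2) := by
    have hσ2 : ∀ σ : BSigned n, (∑ i : Fin n, if fval σ (i:ℕ) + 2 = m then (1:ℤ) else 0)
        = ∑ p ∈ range n, if (fval σ p : ℤ) = (m:ℤ) - 2 then (1:ℤ) else 0 := by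
      intro σ
      rw [Finset.sum_range (fun p => if (fval σ p : ℤ) = (m:ℤ) - 2 then (1:ℤ) else 0)]
      apply Finset.sum_congr rfl
      intro i _
      exact (if_congr (by omega) rfl rfl).symm
    rw [Finset.sum_congr rfl (fun σ _ => hσ2 σ), FZ]
    have : (m:ℤ) - 2 + 1 = (m:ℤ) - 1 := by ring
    rw [this]
  have t4 : (∑ σ : BSigned n, ∑ i : Fin n, if fval σ (i:ℕ) = m then (1:ℤ) else 0)
      = ((m:ℤ)+1) * BhatZ n ((m:ℤ)+1) + ((n:ℤ) - (m:ℤ)) * BhatZ n (m:ℤ) := by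
    have hσ2 : ∀ σ : BSigned n, (∑ i : Fin n, if fval σ (i:ℕ) = m then (1:ℤ) else 0)
        = ∑ p ∈ range n, if (fval σ p : ℤ) = (m:ℤ) then (1:ℤ) else 0 := by
      intro σ
      rw [Finset.sum_range (fun p => if (fval σ p : ℤ) = (m:ℤ) then (1:ℤ) else 0)]
      apply Finset.sum_congr rfl
      intro i _
      exact (if_congr (by omega) rfl rfl).symm
    rw [Finset.sum_congr rfl (fun σ _ => hσ2 σ), FZ]
  rw [hsplit, t1, t2, t3, t4]
  ring

lemma Bhat_one_zero : Bhat 1 0 = 1 := by decide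
lemma Bhat_one_one : Bhat 1 1 = 1 := by decide


/-- the recurrence
`B̂(n+1,k) = (k+1)B̂(n,k+1) + k·B̂(n,k-1) + (n-k+1)B̂(n,k) + (n-k+2)B̂(n,k-2)`
for all `n ≥ 1`, `k ≥ 0`, with initial conditions `B̂(1,0) = B̂(1,1) = 1` and
`B̂(1,k) = 0` for `k > 1`. -/
theorem stmt2 :
    (∀ n : ℕ, 1 ≤ n → ∀ k : ℤ, 0 ≤ k →
      BhatZ (n + 1) k =
        (k + 1) * BhatZ n (k + 1) + k * BhatZ n (k - 1) +
          ((n : ℤ) - k + 1) * BhatZ n k + ((n : ℤ) - k + 2) * BhatZ n (k - 2)) ∧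
    Bhat 1 0 = 1 ∧ Bhat 1 1 = 1 ∧ (∀ k : ℕ, 1 < k → Bhat 1 k = 0) := by
  refine ⟨?_, Bhat_one_zero, Bhat_one_one, ?_⟩
  · intro n _ k hk
    obtain ⟨m, rfl⟩ : ∃ m : ℕ, k = (m : ℤ) := ⟨k.toNat, by omega⟩
    have h1 : BhatZ (n + 1) (m : ℤ) = (Bhat (n + 1) m : ℤ) := by
      rw [BhatZ, if_pos (by omega)]
      simp
    rw [h1, Bhat_rec n m]
  · intro k hk
    rw [Bhat, Finset.card_eq_zero, Finset.filter_eq_empty_iff]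
    intro σ _
    have := altdesB_le σ
    omega
end

section
/- The type B alternating Eulerian polynomials satisfy the recurrence B̂_{n+1}(x) = (1 + n + x + n x²)·B̂_n(x) + (1−x)(1+x²)·B̂_n′(x) for all n ≥ 0, where B̂_n′ denotes the derivative, with initial conditions B̂_0(x) = 1 and B̂_1(x) = 1 + x. -/
open Finset

/-!
Every signed permutation of order `n + 1` arises in exactly one way from a signed permutation `τ`
of order `n` by inserting the letter `±(n + 1)` in some position `q + 1` and changing the signs of
all letters to its right. Changing the signs reverses all comparisons while the shift of positions
reverses all parities, so the alternating descents to the right of the new letter are those of `τ`;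
the alternating descent of `τ` at `q`, if any, is destroyed; and the new letter, which dominates
all others in absolute value, creates alternating descents at `q` and `q + 1` (only at `q` when it
is inserted last) exactly when its sign matches the parity of `q`. Hence the insertions into a `τ`
with `A` alternating descents contribute `(1 + x²)(A x^(A-1) + (n - A) x^A) + (1 + x) x^A`, and
summing over `τ` gives the recurrence.
-/

def IsAltDescentAt (w : ℕ → ℤ) (j : ℕ) : Prop :=
  (Even j ∧ w j < w (j + 1)) ∨ (Odd j ∧ w (j + 1) < w j)

instance (w : ℕ → ℤ) : DecidablePred (IsAltDescentAt w) := fun j => by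
  unfold IsAltDescentAt; infer_instance

section AltDescent

variable {v w : ℕ → ℤ} {j : ℕ}

lemma isAltDescentAt_iff_even_of_lt (h : w j < w (j + 1)) : IsAltDescentAt w j ↔ Even j := by
  unfold IsAltDescentAt
  have : ¬ w (j + 1) < w j := by omega
  tauto

lemma isAltDescentAt_iff_odd_of_lt (h : w (j + 1) < w j) : IsAltDescentAt w j ↔ Odd j := by
  unfold IsAltDescentAt
  have : ¬ w j < w (j + 1) := by omega
  tauto

lemma isAltDescentAt_succ_iff_of_neg (h₀ : v (j + 1) = -w j) (h₁ : v (j + 2) = -w (j + 1)) :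
    IsAltDescentAt v (j + 1) ↔ IsAltDescentAt w j := by
  simp only [IsAltDescentAt, h₀, h₁, neg_lt_neg_iff, Nat.even_add_one, Nat.not_even_iff_odd,
    Nat.odd_add_one, Nat.not_odd_iff_even]
  tauto

end AltDescent

section Word

variable {n : ℕ} (σ : BSigned n)

lemma altdesB_eq_sum :
    altdesB σ = ∑ j ∈ range n, if IsAltDescentAt (bword σ) j then 1 else 0 := by
  rw [altdesB, card_filter]; rfl

lemma bword_zero : bword σ 0 = 0 := by simp [bword]

lemma bword_succ {k : ℕ} (hk : k < n) :
    bword σ (k + 1) = (if σ.2 ⟨k, hk⟩ then -1 else 1) * ((σ.1 ⟨k, hk⟩ : ℕ) + 1) := by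
  simp [bword, hk]

lemma abs_bword_le (j : ℕ) : |bword σ j| ≤ n := by
  rcases j with _ | k
  · simp [bword_zero]
  by_cases hk : k < n
  · have := (σ.1 ⟨k, hk⟩).isLt
    rw [bword_succ σ hk]
    split <;> rw [abs_le] <;> constructor <;> omega
  · simp [bword, show ¬ k + 1 ≤ n by omega]

end Word

section Insert

variable {n : ℕ}

def insertMaxPerm (t : Equiv.Perm (Fin n)) (q : Fin (n + 1)) : Equiv.Perm (Fin (n + 1)) :=
  ((finSuccEquiv' q).trans t.optionCongr).trans (finSuccEquiv' (Fin.last n)).symm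

@[simp]
lemma insertMaxPerm_apply_self (t : Equiv.Perm (Fin n)) (q : Fin (n + 1)) :
    insertMaxPerm t q q = Fin.last n := by
  simp [insertMaxPerm]

@[simp]
lemma insertMaxPerm_apply_succAbove (t : Equiv.Perm (Fin n)) (q : Fin (n + 1)) (k : Fin n) :
    insertMaxPerm t q (q.succAbove k) = (t k).castSucc := by
  simp [insertMaxPerm]

def insertMaxSigns (s : Fin n → Bool) (q : Fin (n + 1)) (ε : Bool) : Fin (n + 1) → Bool :=
  q.insertNth ε fun k => if k.castSucc < q then s k else !s k

/-- Insert the letter `n + 1`, with sign `ε`, in position `q + 1` of the word of `τ`, and change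
the signs of all letters to its right. -/
def insertMax (τ : BSigned n) (q : Fin (n + 1)) (ε : Bool) : BSigned (n + 1) :=
  (insertMaxPerm τ.1 q, insertMaxSigns τ.2 q ε)

lemma insertMax_injective :
    Function.Injective fun p : BSigned n × Fin (n + 1) × Bool => insertMax p.1 p.2.1 p.2.2 := by
  rintro ⟨⟨t, s⟩, q, ε⟩ ⟨⟨t', s'⟩, q', ε'⟩ h
  simp only [insertMax, Prod.mk.injEq] at h
  obtain ⟨hperm, hsigns⟩ := h
  obtain rfl : q = q' := by
    apply (insertMaxPerm t' q').injective
    rw [insertMaxPerm_apply_self, ← hperm, insertMaxPerm_apply_self]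
  obtain rfl : t = t' := Equiv.ext fun k => Fin.castSucc_injective _ <| by
    rw [← insertMaxPerm_apply_succAbove, hperm, insertMaxPerm_apply_succAbove]
  obtain ⟨rfl, hs⟩ := Fin.insertNth_injective2 hsigns
  obtain rfl : s = s' := funext fun k => by
    have := congrFun hs k
    split_ifs at this <;> simpa using this
  rfl

lemma insertMax_bijective :
    Function.Bijective fun p : BSigned n × Fin (n + 1) × Bool => insertMax p.1 p.2.1 p.2.2 := by
  refine (Fintype.bijective_iff_injective_and_card _).2 ⟨insertMax_injective, ?_⟩
  simp only [Fintype.card_prod, Fintype.card_perm, Fintype.card_fun, Fintype.card_fin,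
    Fintype.card_bool, Nat.factorial_succ]
  ring

variable (τ : BSigned n) (q : Fin (n + 1)) (ε : Bool)

lemma bword_insertMax_of_le {j : ℕ} (hj : j ≤ q) : bword (insertMax τ q ε) j = bword τ j := by
  rcases j with _ | k
  · simp only [bword_zero]
  have hk : k < n := by omega
  have hpos : (⟨k, by omega⟩ : Fin (n + 1)) = q.succAbove ⟨k, hk⟩ := by
    rw [Fin.succAbove_of_castSucc_lt q ⟨k, hk⟩ (Fin.lt_def.2 (show k < (q : ℕ) by omega))]; rfl
  rw [bword_succ _ (by omega), bword_succ _ hk, hpos]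
  simp [insertMax, insertMaxSigns, Fin.lt_def, show k < q by omega]

lemma bword_insertMax_self :
    bword (insertMax τ q ε) (q + 1) = if ε then -((n : ℤ) + 1) else (n : ℤ) + 1 := by
  rw [bword_succ _ q.isLt]
  simp [insertMax, insertMaxSigns]

lemma bword_insertMax_of_ge {k : ℕ} (hqk : q ≤ k) (hk : k < n) :
    bword (insertMax τ q ε) (k + 2) = -bword τ (k + 1) := by
  have hpos : (⟨k + 1, by omega⟩ : Fin (n + 1)) = q.succAbove ⟨k, hk⟩ := by
    rw [Fin.succAbove_of_le_castSucc q ⟨k, hk⟩ (Fin.le_def.2 hqk)]; rfl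
  rw [bword_succ _ (by omega), bword_succ _ hk, hpos]
  cases h : τ.2 ⟨k, hk⟩ <;> simp [insertMax, insertMaxSigns, Fin.lt_def, show ¬ k < q by omega, h]

lemma isAltDescentAt_insertMax_self :
    IsAltDescentAt (bword (insertMax τ q ε)) q ↔ (Even (q : ℕ) ↔ ε = false) := by
  have hb := abs_le.1 (abs_bword_le τ q)
  have hself := bword_insertMax_self τ q ε
  have hprev := bword_insertMax_of_le τ q ε le_rfl
  cases ε <;> simp only [Bool.false_eq_true, ↓reduceIte] at hself
  · rw [isAltDescentAt_iff_even_of_lt (by omega)]; simp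
  · rw [isAltDescentAt_iff_odd_of_lt (by omega)]; simp

lemma isAltDescentAt_insertMax_succ (hq : (q : ℕ) < n) :
    IsAltDescentAt (bword (insertMax τ q ε)) (q + 1) ↔ (Even (q : ℕ) ↔ ε = false) := by
  have hb := abs_le.1 (abs_bword_le τ (q + 1))
  have hself := bword_insertMax_self τ q ε
  have hnext : bword (insertMax τ q ε) (q + 1 + 1) = -bword τ (q + 1) :=
    bword_insertMax_of_ge τ q ε le_rfl hq
  cases ε <;> simp only [Bool.false_eq_true, ↓reduceIte] at hself
  · rw [isAltDescentAt_iff_odd_of_lt (by omega)]; simp [Nat.odd_add_one]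
  · rw [isAltDescentAt_iff_even_of_lt (by omega)]; simp [Nat.even_add_one]

lemma isAltDescentAt_insertMax_of_lt {j : ℕ} (hj : j < q) :
    IsAltDescentAt (bword (insertMax τ q ε)) j ↔ IsAltDescentAt (bword τ) j := by
  simp only [IsAltDescentAt, bword_insertMax_of_le τ q ε hj.le,
    bword_insertMax_of_le τ q ε (Nat.succ_le_of_lt hj)]

lemma isAltDescentAt_insertMax_of_gt {j : ℕ} (hqj : q < j) (hj : j < n) :
    IsAltDescentAt (bword (insertMax τ q ε)) (j + 1) ↔ IsAltDescentAt (bword τ) j := by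
  obtain ⟨k, rfl⟩ : ∃ k, j = k + 1 := ⟨j - 1, by omega⟩
  exact isAltDescentAt_succ_iff_of_neg (bword_insertMax_of_ge τ q ε (by omega) (by omega))
    (bword_insertMax_of_ge τ q ε (by omega) hj)

lemma altdesB_insertMax_of_lt (hq : (q : ℕ) < n) :
    altdesB (insertMax τ q ε) = (altdesB τ - if IsAltDescentAt (bword τ) q then 1 else 0) +
      if (Even (q : ℕ) ↔ ε = false) then 2 else 0 := by
  obtain ⟨m, hm⟩ : ∃ m, n = q + 1 + m := ⟨n - q - 1, by omega⟩
  have hold := altdesB_eq_sum τ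
  have hnew := altdesB_eq_sum (insertMax τ q ε)
  rw [show range n = range (q + (m + 1)) by congr 1; omega, sum_range_add,
    sum_range_succ'] at hold
  rw [show range (n + 1) = range (q + (m + 2)) by congr 1; omega, sum_range_add,
    sum_range_succ', sum_range_succ'] at hnew
  have hprefix : ∑ j ∈ range q, (if IsAltDescentAt (bword (insertMax τ q ε)) j then 1 else 0) =
      ∑ j ∈ range q, if IsAltDescentAt (bword τ) j then 1 else 0 :=
    sum_congr rfl fun j hj => if_congr
      (isAltDescentAt_insertMax_of_lt τ q ε (mem_range.1 hj)) rfl rfl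
  have hsuffix : ∑ k ∈ range m,
      (if IsAltDescentAt (bword (insertMax τ q ε)) (q + (k + 1 + 1)) then 1 else 0) =
      ∑ k ∈ range m, if IsAltDescentAt (bword τ) (q + (k + 1)) then 1 else 0 :=
    sum_congr rfl fun k hk => if_congr (isAltDescentAt_insertMax_of_gt τ q ε (j := q + (k + 1))
      (by omega) (by have := mem_range.1 hk; omega)) rfl rfl
  rw [hprefix, hsuffix] at hnew
  simp only [add_zero, zero_add, isAltDescentAt_insertMax_self,
    isAltDescentAt_insertMax_succ τ q ε hq] at hnew hold
  have hpos : IsAltDescentAt (bword τ) q → 1 ≤ altdesB τ := fun h =>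
    card_pos.2 ⟨q, mem_filter.2 ⟨mem_range.2 hq, h⟩⟩
  split_ifs at hnew hold hpos ⊢ <;> omega

lemma altdesB_insertMax_last :
    altdesB (insertMax τ (Fin.last n) ε) = altdesB τ + if (Even n ↔ ε = false) then 1 else 0 := by
  rw [altdesB_eq_sum, sum_range_succ, altdesB_eq_sum,
    sum_congr rfl fun j hj => if_congr (isAltDescentAt_insertMax_of_lt τ (Fin.last n) ε
      (by simpa using mem_range.1 hj)) rfl rfl]
  exact congrArg _ <| if_congr
    (by simpa using isAltDescentAt_insertMax_self τ (Fin.last n) ε) rfl rfl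

end Insert

lemma sum_bool_pow_add_ite {M : Type*} [Semiring M] (x : M) (a k : ℕ) (c : Prop)
    [Decidable c] :
    ∑ ε : Bool, x ^ (a + if (c ↔ ε = false) then k else 0) = x ^ a * (1 + x ^ k) := by
  by_cases hc : c <;> simp [hc, pow_add, mul_add, add_comm]

lemma sum_pow_altdesB_insertMax {n : ℕ} (τ : BSigned n) (x : ℝ) :
    ∑ q : Fin (n + 1), ∑ ε : Bool, x ^ altdesB (insertMax τ q ε) =
      (1 + n + x + n * x ^ 2) * x ^ altdesB τ +
        (1 - x) * (1 + x ^ 2) * (altdesB τ * x ^ (altdesB τ - 1)) := by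
  set A := altdesB τ
  set D := IsAltDescentAt (bword τ)
  have hinner : ∀ q : Fin n, ∑ ε : Bool, x ^ altdesB (insertMax τ q.castSucc ε) =
      (1 + x ^ 2) * if D q then x ^ (A - 1) else x ^ A := by
    intro q
    simp only [fun ε => altdesB_insertMax_of_lt τ q.castSucc ε q.isLt, Fin.val_castSucc]
    rw [sum_bool_pow_add_ite, mul_comm]
    split_ifs <;> rfl
  have hlast : ∑ ε : Bool, x ^ altdesB (insertMax τ (Fin.last n) ε) = (1 + x) * x ^ A := by
    simp only [altdesB_insertMax_last]
    rw [sum_bool_pow_add_ite, pow_one, mul_comm]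
  have hcount : ∑ q : Fin n, (if D q then x ^ (A - 1) else x ^ A) =
      A * x ^ (A - 1) + ((n - A : ℕ) : ℝ) * x ^ A := by
    have hcard : #{j ∈ range n | D j} = A := rfl
    have hcompl : #{j ∈ range n | ¬ D j} = n - A := by
      have := card_filter_add_card_filter_not (s := range n) D
      rw [card_range, hcard] at this
      omega
    rw [Fin.sum_univ_eq_sum_range (fun j => if D j then x ^ (A - 1) else x ^ A), sum_ite,
      sum_const, sum_const, nsmul_eq_mul, nsmul_eq_mul, hcard, hcompl]
  have hAn : A ≤ n := (card_filter_le _ _).trans (card_range n).le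
  have hderiv : x * (A * x ^ (A - 1)) = A * x ^ A := by
    rcases Nat.eq_zero_or_pos A with h | h
    · simp [h]
    · rw [mul_left_comm, ← pow_succ', Nat.sub_add_cancel h]
  rw [Fin.sum_univ_castSucc, sum_congr rfl fun q _ => hinner q, ← mul_sum, hcount, hlast,
    Nat.cast_sub hAn]
  linear_combination (1 + x ^ 2) * hderiv

lemma deriv_Bpoly (n : ℕ) (x : ℝ) :
    deriv (Bpoly n) x = ∑ τ : BSigned n, (altdesB τ : ℝ) * x ^ (altdesB τ - 1) :=
  (HasDerivAt.fun_sum fun τ _ => hasDerivAt_pow (altdesB τ) x).deriv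

lemma Bpoly_succ (n : ℕ) (x : ℝ) :
    Bpoly (n + 1) x =
      (1 + n + x + n * x ^ 2) * Bpoly n x + (1 - x) * (1 + x ^ 2) * deriv (Bpoly n) x :=
  calc Bpoly (n + 1) x
      = ∑ τ : BSigned n, ∑ q : Fin (n + 1), ∑ ε : Bool, x ^ altdesB (insertMax τ q ε) := by
        rw [Bpoly, ← Fintype.sum_bijective _ insertMax_bijective _ _ fun _ => rfl]
        simp only [Fintype.sum_prod_type]
    _ = ∑ τ : BSigned n, ((1 + n + x + n * x ^ 2) * x ^ altdesB τ +
          (1 - x) * (1 + x ^ 2) * (altdesB τ * x ^ (altdesB τ - 1))) :=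
        sum_congr rfl fun τ _ => sum_pow_altdesB_insertMax τ x
    _ = _ := by rw [sum_add_distrib, ← mul_sum, ← mul_sum, deriv_Bpoly, Bpoly]

lemma Bpoly_zero (x : ℝ) : Bpoly 0 x = 1 := by
  simp [Bpoly, altdesB]

/-- the recurrence
`B̂_{n+1}(x) = (1 + n + x + n x²)·B̂_n(x) + (1-x)(1+x²)·B̂_n'(x)` for all `n ≥ 0`,
with initial conditions `B̂_0(x) = 1` and `B̂_1(x) = 1 + x`. -/
theorem stmt3 :
    (∀ (n : ℕ) (x : ℝ),
      Bpoly (n + 1) x =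
        (1 + n + x + n * x ^ 2) * Bpoly n x + (1 - x) * (1 + x ^ 2) * deriv (Bpoly n) x) ∧
    (∀ x : ℝ, Bpoly 0 x = 1) ∧ (∀ x : ℝ, Bpoly 1 x = 1 + x) := by
  refine ⟨Bpoly_succ, Bpoly_zero, fun x => ?_⟩
  rw [Bpoly_succ, show Bpoly 0 = fun _ => 1 from funext Bpoly_zero, deriv_const]
  norm_num
end

section
/- For every n ≥ 0 and every real x, B̂_n(x) = Σ_{k=0}^{⌊n/2⌋} 2^k · M(n,k) · (1+x²)^k · (1+x)^{n−2k}, where M(n,k) is the number of permutations of {1,…,n} with exactly k left peaks. -/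
open Finset

/-!
Negate the letters of `σ` in odd positions: `τ(j) = (-1)^j σ(j)`, with `τ(0) = 0`. Then `j` is an
alternating descent of `σ` exactly when `τ(j) + τ(j+1) < 0`, i.e. when the one of `τ(j), τ(j+1)`
of larger absolute value is negative. So, for a fixed underlying permutation `π`,
`x^altdes(σ) = ∏ i, x^(c i · [τ(i) < 0])`, where `c i ∈ {0, 1, 2}` counts the neighbours of
position `i` carrying a smaller letter of `π` (with `π(0) = 0`, and no right neighbour at `n`).
The signs of the `τ(i)` vary independently, so summing over them gives `∏ i, (1 + x^(c i))`.
The positions with `c i = 2` are the left peaks of `π`, and as `Σ c i = n` there are equally many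
with `c i = 0`; hence the product is `2^k (1 + x²)^k (1 + x)^(n - 2k)` with `k = lpk π`.
-/

section CountingByValues

variable {ι : Type*} (s : Finset ι) (c : ι → ℕ)

@[to_additive]
theorem prod_comp_eq_of_le_two {M : Type*} [CommMonoid M] (hc : ∀ i ∈ s, c i ≤ 2)
    (f : ℕ → M) :
    ∏ i ∈ s, f (c i) =
      f 0 ^ #{i ∈ s | c i = 0} * f 1 ^ #{i ∈ s | c i = 1} * f 2 ^ #{i ∈ s | c i = 2} := by
  have fiber (k : ℕ) : ∏ i ∈ s with c i = k, f (c i) = f k ^ #{i ∈ s | c i = k} := by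
    rw [prod_congr rfl fun i hi => by rw [(mem_filter.1 hi).2], prod_const]
  rw [← prod_fiberwise_of_maps_to (t := range 3) fun i hi =>
    mem_range.2 (Nat.lt_succ_of_le (hc i hi))]
  simp only [prod_range_succ, prod_range_zero, one_mul, fiber]

theorem card_fibers_of_sum_eq_card (hc : ∀ i ∈ s, c i ≤ 2) (hsum : ∑ i ∈ s, c i = #s) :
    #{i ∈ s | c i = 0} = #{i ∈ s | c i = 2} ∧
      #{i ∈ s | c i = 1} + 2 * #{i ∈ s | c i = 2} = #s := by
  have hcard := sum_comp_eq_of_le_two s c hc fun _ => 1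
  have hsum' := sum_comp_eq_of_le_two s c hc id
  simp only [sum_const, smul_eq_mul, mul_one, id] at hcard hsum'
  omega

theorem prod_one_add_pow_of_sum_eq_card {R : Type*} [CommSemiring R]
    (hc : ∀ i ∈ s, c i ≤ 2) (hsum : ∑ i ∈ s, c i = #s) (x : R) :
    ∏ i ∈ s, (1 + x ^ c i) =
      2 ^ #{i ∈ s | c i = 2} * (1 + x ^ 2) ^ #{i ∈ s | c i = 2} *
        (1 + x) ^ (#s - 2 * #{i ∈ s | c i = 2}) := by
  obtain ⟨h0, h1⟩ := card_fibers_of_sum_eq_card s c hc hsum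
  rw [prod_comp_eq_of_le_two s c hc fun k => 1 + x ^ k, h0,
    show #{i ∈ s | c i = 1} = #s - 2 * #{i ∈ s | c i = 2} by omega]
  norm_num
  ring

end CountingByValues

section SmallerNeighbors

variable (a : ℕ → ℕ) (n : ℕ)

def smallerNeighbors (i : ℕ) : ℕ :=
  (if a (i - 1) < a i then 1 else 0) + (if i < n ∧ a (i + 1) < a i then 1 else 0)

theorem smallerNeighbors_le_two (i : ℕ) : smallerNeighbors a n i ≤ 2 := by
  unfold smallerNeighbors
  split_ifs <;> omega

theorem sum_smallerNeighbors_mul (ha : a 0 = 0) (g : ℕ → ℕ) :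
    ∑ i ∈ range n, smallerNeighbors a n (i + 1) * g (i + 1) =
      ∑ j ∈ range n, ((if a j < a (j + 1) then g (j + 1) else 0) +
        (if a (j + 1) < a j then g j else 0)) := by
  have h0 : smallerNeighbors a n 0 = 0 := by simp [smallerNeighbors, ha]
  calc ∑ i ∈ range n, smallerNeighbors a n (i + 1) * g (i + 1)
      = ∑ i ∈ range (n + 1), smallerNeighbors a n i * g i := by
        rw [sum_range_succ' _ n, h0, zero_mul, add_zero]
    _ = ∑ i ∈ range (n + 1), (if a (i - 1) < a i then g i else 0) +
          ∑ i ∈ range (n + 1), (if i < n ∧ a (i + 1) < a i then g i else 0) := by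
        rw [← sum_add_distrib]
        refine sum_congr rfl fun i _ => ?_
        simp only [smallerNeighbors, add_mul, ite_mul, one_mul, zero_mul]
    _ = _ := by
        rw [sum_range_succ' _ n, sum_range_succ _ n, sum_add_distrib]
        simp only [ha, zero_tsub, lt_self_iff_false, if_false, add_zero, add_tsub_cancel_right,
          false_and]
        congr 1
        exact sum_congr rfl fun j hj => by simp [mem_range.1 hj]

theorem sum_smallerNeighbors (ha : a 0 = 0) (hne : ∀ j < n, a j ≠ a (j + 1)) :
    ∑ i ∈ range n, smallerNeighbors a n (i + 1) = n := by
  have h := sum_smallerNeighbors_mul a n ha fun _ => 1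
  simp only [mul_one] at h
  rw [h]
  conv_rhs => rw [← card_range n, card_eq_sum_ones]
  refine sum_congr rfl fun j hj => ?_
  have := hne j (mem_range.1 hj)
  split_ifs <;> omega

theorem smallerNeighbors_eq_two_iff (i : ℕ) :
    smallerNeighbors a n i = 2 ↔ a (i - 1) < a i ∧ i < n ∧ a (i + 1) < a i := by
  unfold smallerNeighbors
  split_ifs <;> simp_all

theorem card_smallerNeighbors_eq_two :
    #{i ∈ range n | smallerNeighbors a n (i + 1) = 2} =
      #{i ∈ Icc 1 (n - 1) | a (i - 1) < a i ∧ a (i + 1) < a i} := by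
  refine card_nbij' (· + 1) (· - 1) ?_ ?_ ?_ ?_ <;> intro i hi <;>
    simp only [coe_filter, mem_range, mem_Icc, Set.mem_ofPred_eq,
      smallerNeighbors_eq_two_iff] at hi ⊢
  · exact ⟨by omega, hi.2.1, hi.2.2.2⟩
  · rw [Nat.sub_add_cancel hi.1.1]
    exact ⟨by omega, hi.2.1, by omega, hi.2.2⟩
  · rfl
  · omega

end SmallerNeighbors

section SignedPermutations

variable {n : ℕ}

theorem aword_zero (π : Equiv.Perm (Fin n)) : aword π 0 = 0 := by
  simp [aword]

theorem aword_ne_aword_succ (π : Equiv.Perm (Fin n)) {j : ℕ} (hj : j < n) :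
    aword π j ≠ aword π (j + 1) := by
  unfold aword
  split_ifs
  · intro h
    have := congrArg Fin.val (π.injective (Fin.ext (Nat.succ_inj.mp h)))
    simp only at this
    omega
  all_goals omega

theorem natAbs_bword (σ : BSigned n) (j : ℕ) : (bword σ j).natAbs = aword σ.1 j := by
  unfold bword aword
  split_ifs <;> simp <;> omega

def twistedWord (σ : BSigned n) (j : ℕ) : ℤ := (-1) ^ j * bword σ j

theorem natAbs_twistedWord (σ : BSigned n) (j : ℕ) :
    (twistedWord σ j).natAbs = aword σ.1 j := by
  simp [twistedWord, Int.natAbs_mul, natAbs_bword]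

theorem twistedWord_succ_neg_iff (π : Equiv.Perm (Fin n)) (ε : Fin n → Bool) (i : Fin n) :
    twistedWord (π, ε) (i + 1) < 0 ↔ ε i = decide (Odd (i : ℕ)) := by
  unfold twistedWord bword
  rw [dif_pos ⟨by omega, i.isLt⟩]
  simp only [add_tsub_cancel_right, Fin.eta]
  rcases Nat.even_or_odd (i : ℕ) with h | h
  · rw [(h.add_one).neg_one_pow]
    cases ε i <;> simp [Nat.not_odd_iff_even.2 h] <;> omega
  · rw [(h.add_one).neg_one_pow]
    cases ε i <;> simp [h] <;> omega

theorem altdesB_eq_card_twistedWord (σ : BSigned n) :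
    altdesB σ = #{j ∈ range n | twistedWord σ j + twistedWord σ (j + 1) < 0} := by
  unfold altdesB twistedWord
  congr 1
  refine filter_congr fun j _ => ?_
  rcases Nat.even_or_odd j with h | h
  · simp [h, h.neg_one_pow, h.add_one.neg_one_pow, Nat.not_odd_iff_even.2 h]
  · simp [h, h.neg_one_pow, h.add_one.neg_one_pow, Nat.not_even_iff_odd.2 h]

theorem altdesB_eq_sum_smallerNeighbors (σ : BSigned n) :
    altdesB σ = ∑ i ∈ range n, smallerNeighbors (aword σ.1) n (i + 1) *
      if twistedWord σ (i + 1) < 0 then 1 else 0 := by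
  rw [sum_smallerNeighbors_mul _ _ (aword_zero σ.1) fun i => if twistedWord σ i < 0 then 1 else 0,
    altdesB_eq_card_twistedWord, card_filter]
  refine sum_congr rfl fun j hj => ?_
  have hne := aword_ne_aword_succ σ.1 (mem_range.1 hj)
  have h₀ := natAbs_twistedWord σ j
  have h₁ := natAbs_twistedWord σ (j + 1)
  split_ifs <;> omega

theorem sum_pow_altdesB {R : Type*} [CommSemiring R] (π : Equiv.Perm (Fin n)) (x : R) :
    ∑ ε : Fin n → Bool, x ^ altdesB (π, ε) =
      ∏ i ∈ range n, (1 + x ^ smallerNeighbors (aword π) n (i + 1)) := by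
  have h (ε : Fin n → Bool) : x ^ altdesB (π, ε) = ∏ i : Fin n,
      if ε i = decide (Odd (i : ℕ)) then x ^ smallerNeighbors (aword π) n (i + 1) else 1 := by
    rw [altdesB_eq_sum_smallerNeighbors, ← prod_pow_eq_pow_sum,
      ← Fin.prod_univ_eq_prod_range (fun i => x ^ _)]
    refine prod_congr rfl fun i _ => ?_
    simp only [twistedWord_succ_neg_iff]
    split_ifs <;> simp
  rw [sum_congr rfl fun ε _ => h ε, ← Fintype.prod_sum fun (i : Fin n) (b : Bool) =>
      if b = decide (Odd (i : ℕ)) then x ^ smallerNeighbors (aword π) n (i + 1) else 1,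
    ← Fin.prod_univ_eq_prod_range (fun i => 1 + x ^ _)]
  refine prod_congr rfl fun i _ => ?_
  rw [Fintype.sum_bool]
  cases decide (Odd (i : ℕ)) <;> simp [add_comm]

end SignedPermutations

section LeftPeaks

variable {n : ℕ} (π : Equiv.Perm (Fin n))

theorem lpk_eq_card_smallerNeighbors_eq_two :
    lpk π = #{i ∈ range n | smallerNeighbors (aword π) n (i + 1) = 2} :=
  (card_smallerNeighbors_eq_two (aword π) n).symm

theorem sum_smallerNeighbors_aword :
    ∑ i ∈ range n, smallerNeighbors (aword π) n (i + 1) = #(range n) := by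
  rw [card_range]
  exact sum_smallerNeighbors _ n (aword_zero π) fun _ => aword_ne_aword_succ π

theorem two_mul_lpk_le : 2 * lpk π ≤ n := by
  have := (card_fibers_of_sum_eq_card _ _ (fun i _ => smallerNeighbors_le_two _ n (i + 1))
    (sum_smallerNeighbors_aword π)).2
  rw [card_range, ← lpk_eq_card_smallerNeighbors_eq_two] at this
  omega

theorem sum_pow_altdesB_eq_lpk {R : Type*} [CommSemiring R] (x : R) :
    ∑ ε : Fin n → Bool, x ^ altdesB (π, ε) =
      2 ^ lpk π * (1 + x ^ 2) ^ lpk π * (1 + x) ^ (n - 2 * lpk π) := by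
  rw [sum_pow_altdesB, prod_one_add_pow_of_sum_eq_card _ _
    (fun i _ => smallerNeighbors_le_two _ n (i + 1)) (sum_smallerNeighbors_aword π),
    card_range, ← lpk_eq_card_smallerNeighbors_eq_two]

end LeftPeaks

/-- the combinatorial expansion
`B̂_n(x) = Σ_{k=0}^{⌊n/2⌋} 2^k M(n,k) (1+x²)^k (1+x)^{n-2k}`. -/
theorem stmt7 (n : ℕ) (x : ℝ) :
    Bpoly n x =
      ∑ k ∈ Finset.range (n / 2 + 1),
        2 ^ k * (M n k : ℝ) * (1 + x ^ 2) ^ k * (1 + x) ^ (n - 2 * k) := by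
  have hlpk (π : Equiv.Perm (Fin n)) (_ : π ∈ univ) : lpk π ∈ range (n / 2 + 1) :=
    mem_range.2 (by have := two_mul_lpk_le π; omega)
  rw [Bpoly, Fintype.sum_prod_type]
  simp only [sum_pow_altdesB_eq_lpk]
  rw [← sum_fiberwise_of_maps_to hlpk]
  refine sum_congr rfl fun k _ => ?_
  rw [sum_congr rfl fun π hπ => by rw [(mem_filter.1 hπ).2], sum_const, nsmul_eq_mul, M]
  ring
end
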